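/- arXiv:2405.08433 — 9 statements merged into one kernel-verified Lean document; each statement's English description precedes it below -/
import Mathlib

section
/- A group G is abelian if and only if there exists g ∈ G such that conjugation-by-g twisted conjugacy is a congruence on G, i.e., all twisted conjugacy classes of the inner automorphism induced by g have the same cardinality (equivalently, each class of x equals x·[G,ḡ]). -/
/-- A group `G` is abelian if and only if there exists `g ∈ G` such that twisted conjugacy by
the inner automorphism induced by `g` is a congruence on `G`, i.e. the twisted class of each
`x` equals the coset `x·[1]` where `[1] = {h⁻¹ * h^g | h ∈ G}`. -/
theorem abelian_iff_exists_inner_twisted_congruence (G : Type*) [Group G] :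
    (∀ a b : G, a * b = b * a) ↔
      ∃ g : G, ∀ x : G, {y : G | ∃ z : G, y = z⁻¹ * x * (g⁻¹ * z * g)}
        = (fun h => x * h) '' {y : G | ∃ h : G, y = h⁻¹ * (g⁻¹ * h * g)} := by
  constructor
  · intro hcomm
    refine ⟨1, fun x => ?_⟩
    ext y
    simp only [Set.mem_setOf_eq, Set.mem_image]
    constructor
    · rintro ⟨z, rfl⟩
      refine ⟨1, ⟨1, by group⟩, ?_⟩
      have h : z⁻¹ * x * z = x := by
        rw [mul_assoc, hcomm x z, ← mul_assoc, inv_mul_cancel, one_mul]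
      simp only [inv_one, one_mul, mul_one]
      exact h.symm
    · rintro ⟨w, ⟨h, rfl⟩, rfl⟩
      exact ⟨1, by group⟩
  · rintro ⟨g, hg⟩ a b
    -- first: g is central
    have hcg : ∀ h : G, g * h = h * g := by
      intro h0
      have hmem : g * (h0⁻¹ * (g⁻¹ * h0 * g)) ∈
          (fun h => g * h) '' {y : G | ∃ h : G, y = h⁻¹ * (g⁻¹ * h * g)} :=
        ⟨h0⁻¹ * (g⁻¹ * h0 * g), ⟨h0, rfl⟩, rfl⟩
      rw [← hg g] at hmem
      obtain ⟨z, hz⟩ := hmem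
      have hz' : z⁻¹ * g * (g⁻¹ * z * g) = g := by group
      rw [hz'] at hz
      have h1 := mul_left_cancel (a := g) (b := h0⁻¹ * (g⁻¹ * h0 * g)) (c := (1:G))
        (by rw [mul_one]; exact hz)
      have h2 := mul_left_cancel (a := h0⁻¹) (b := g⁻¹ * h0 * g) (c := h0)
        (by rw [h1, inv_mul_cancel])
      calc g * h0 = g * (g⁻¹ * h0 * g) := by rw [h2]
        _ = h0 * g := by group
    -- now commutativity
    have hmem : b⁻¹ * a * (g⁻¹ * b * g) ∈
        {y : G | ∃ z : G, y = z⁻¹ * a * (g⁻¹ * z * g)} := ⟨b, rfl⟩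
    rw [hg a] at hmem
    obtain ⟨w, ⟨h0, rfl⟩, hw⟩ := hmem
    have h2 : g⁻¹ * h0 * g = h0 := by
      have := hcg h0
      calc g⁻¹ * h0 * g = g⁻¹ * (h0 * g) := by group
        _ = g⁻¹ * (g * h0) := by rw [this]
        _ = h0 := by group
    have h3 : g⁻¹ * b * g = b := by
      have := hcg b
      calc g⁻¹ * b * g = g⁻¹ * (b * g) := by group
        _ = g⁻¹ * (g * b) := by rw [this]
        _ = b := by group
    rw [h2, h3] at hw
    have h4 : b⁻¹ * a * b = a := by rw [← hw]; group
    calc a * b = b * (b⁻¹ * a * b) := by group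
      _ = b * a := by rw [h4]
end

section
/- Let p be an odd prime, n ≥ 2, and G = A ⋊ ⟨x⟩ where A = Z_{p^n} × Z_{p^n}, ⟨x⟩ ≅ Z_{p^{n-1}}, and x acts on A by c ↦ c^{1+p}. Then the commutator subgroup G' equals A^p = ⟨a^p⟩ × ⟨b^p⟩ and G is nilpotent of class exactly n. -/
/-!
Conjugation by an element `a * x ^ m` of `G = A ⋊ ⟨x⟩` acts on the abelian group `A` as the
power map `c ↦ c ^ (1 + p) ^ m`, and `(1 + p) ^ m ≡ 1 [MOD p]`; so every `⁅c, g⁆` with `c ∈ A`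
is a `p`-th power of a power of `c`, while `⁅c⁻¹, x⁻¹⁆ = c ^ p`. Hence `⁅A ^ k, G⁆ = A ^ (k * p)`.
As `G / A` is cyclic, `G' = ⁅A, G⁆`, so `γ_{k+1}(G) = A ^ (p ^ (k + 1))`, which vanishes exactly
from `k + 1 = n` on because `A ≅ (ℤ/p^n)²` has exponent `p ^ n`.
-/

open Subgroup
open scoped commutatorElement

section

variable {G : Type*} [Group G]

namespace Subgroup

open scoped IsMulCommutative in
def powImage (A : Subgroup G) [IsMulCommutative A] (k : ℕ) : Subgroup G :=
  (A.subtype.comp (powMonoidHom k)).range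

variable {A : Subgroup G} [IsMulCommutative A]

theorem mem_powImage {k : ℕ} {g : G} : g ∈ A.powImage k ↔ ∃ c ∈ A, c ^ k = g := by
  simp [powImage]

theorem powImage_one : A.powImage 1 = A := by
  ext g; simp [mem_powImage]

theorem powImage_eq_bot_iff {k : ℕ} : A.powImage k = ⊥ ↔ Monoid.exponent A ∣ k := by
  simp [eq_bot_iff_forall, mem_powImage, Monoid.exponent_dvd_iff_forall_pow_eq_one]

end Subgroup

theorem commutator_eq_commutator_top_of_isComplement' {A H : Subgroup G} [A.Normal]
    [IsMulCommutative H] (hAH : A.IsComplement' H) : commutator G = ⁅A, ⊤⁆ := by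
  refine le_antisymm ?_ (commutator_mono le_top le_rfl)
  rw [commutator_def, commutator_le]
  intro g _ h _
  obtain ⟨⟨⟨a, ha⟩, ⟨y, hy⟩⟩, rfl, -⟩ := hAH.existsUnique g
  obtain ⟨⟨⟨b, hb⟩, ⟨z, hz⟩⟩, rfl, -⟩ := hAH.existsUnique h
  have hyz : ⁅a * y, z⁆ = ⁅a, z⁆ := by
    simp only [commutatorElement_def]
    rw [show a * y * z = a * z * y by rw [mul_assoc, setLike_mul_comm hy hz, mul_assoc]]
    group
  have hsplit : ⁅a * y, b * z⁆ = ⁅a * y, b⁆ * (b * ⁅a * y, z⁆ * b⁻¹) := by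
    simp only [commutatorElement_def]; group
  rw [hsplit, hyz]
  refine mul_mem ?_ (Normal.conj_mem inferInstance _ ?_ b)
  · rw [commutator_comm]; exact commutator_mem_commutator (mem_top _) hb
  · exact commutator_mem_commutator ha (mem_top z)

variable {A : Subgroup G} {x : G} {q : ℕ}

theorem conj_pow_eq_pow_pow (hact : ∀ c ∈ A, x⁻¹ * c * x = c ^ (1 + q)) (m : ℕ) {c : G}
    (hc : c ∈ A) : (x ^ m)⁻¹ * c * x ^ m = c ^ (1 + q) ^ m := by
  induction m generalizing c with
  | zero => simp
  | succ m ih =>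
    calc (x ^ (m + 1))⁻¹ * c * x ^ (m + 1) = x⁻¹ * ((x ^ m)⁻¹ * c * x ^ m) * x := by group
      _ = c ^ (1 + q) ^ (m + 1) := by
        rw [ih hc, hact _ (pow_mem hc _), ← pow_mul, pow_succ]

variable [IsMulCommutative A]

theorem exists_conj_eq_pow_pow (hact : ∀ c ∈ A, x⁻¹ * c * x = c ^ (1 + q))
    (hAx : A.IsComplement' (zpowers x)) (hx : IsOfFinOrder x) (g : G) {c : G} (hc : c ∈ A) :
    ∃ m : ℕ, g⁻¹ * c * g = c ^ (1 + q) ^ m := by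
  obtain ⟨⟨⟨a, ha⟩, ⟨y, hy⟩⟩, rfl, -⟩ := hAx.existsUnique g
  obtain ⟨m, rfl⟩ := hx.mem_powers_iff_mem_zpowers.mpr hy
  refine ⟨m, ?_⟩
  calc (a * x ^ m)⁻¹ * c * (a * x ^ m) = (x ^ m)⁻¹ * (a⁻¹ * (c * a)) * x ^ m := by group
    _ = c ^ (1 + q) ^ m := by
      rw [setLike_mul_comm hc ha, inv_mul_cancel_left, conj_pow_eq_pow_pow hact m hc]

theorem commutator_powImage_top (hact : ∀ c ∈ A, x⁻¹ * c * x = c ^ (1 + q))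
    (hAx : A.IsComplement' (zpowers x)) (hx : IsOfFinOrder x) (k : ℕ) :
    ⁅A.powImage k, ⊤⁆ = A.powImage (k * q) := by
  apply le_antisymm
  · rw [commutator_le]
    rintro _ hdk g -
    obtain ⟨d, hd, rfl⟩ := mem_powImage.mp hdk
    obtain ⟨m, hm⟩ := exists_conj_eq_pow_pow hact hAx hx g⁻¹ (inv_mem (pow_mem hd k))
    obtain ⟨t, ht⟩ : ∃ t, (1 + q) ^ m = 1 + q * t := by
      obtain ⟨t, ht⟩ := Nat.sub_one_dvd_pow_sub_one (1 + q) m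
      rw [Nat.add_sub_cancel_left] at ht
      exact ⟨t, by have := Nat.one_le_pow m (1 + q) (by omega); omega⟩
    refine mem_powImage.mpr ⟨(d ^ t)⁻¹, inv_mem (pow_mem hd t), ?_⟩
    rw [inv_inv] at hm
    calc (d ^ t)⁻¹ ^ (k * q) = d ^ k * (d ^ k)⁻¹ ^ (1 + q * t) := by group
      _ = ⁅d ^ k, g⁆ := by rw [← ht, ← hm, commutatorElement_def]; group
  · intro _ hdkq
    obtain ⟨d, hd, rfl⟩ := mem_powImage.mp hdkq
    have hcomm : ⁅(d ^ k)⁻¹, x⁻¹⁆ = d ^ (k * q) := by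
      calc ⁅(d ^ k)⁻¹, x⁻¹⁆ = (d ^ k)⁻¹ * (x⁻¹ * d ^ k * x) := by
            rw [commutatorElement_def]; group
        _ = d ^ (k * q) := by rw [hact _ (pow_mem hd k)]; group
    rw [← hcomm]
    exact commutator_mem_commutator (inv_mem (mem_powImage.mpr ⟨d, hd, rfl⟩)) (mem_top _)

theorem lowerCentralSeries_succ_eq_powImage [A.Normal]
    (hact : ∀ c ∈ A, x⁻¹ * c * x = c ^ (1 + q))
    (hAx : A.IsComplement' (zpowers x)) (hx : IsOfFinOrder x) (k : ℕ) :
    (⊤ : Subgroup G).lowerCentralSeries (k + 1) = A.powImage (q ^ (k + 1)) := by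
  induction k with
  | zero =>
    calc (⊤ : Subgroup G).lowerCentralSeries 1 = ⁅A.powImage 1, ⊤⁆ := by
          rw [top_lowerCentralSeries_one, powImage_one,
            commutator_eq_commutator_top_of_isComplement' hAx]
      _ = A.powImage (q ^ 1) := by rw [commutator_powImage_top hact hAx hx, one_mul, pow_one]
  | succ k ih =>
    rw [Subgroup.lowerCentralSeries_succ, ih, commutator_powImage_top hact hAx hx, ← pow_succ]

end

theorem commutator_and_class_of_construction_general (p n : ℕ) (hp : p.Prime)
    (hn : 2 ≤ n) (G : Type*) [Group G] (A : Subgroup G) (x : G)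
    (hAnorm : A.Normal)
    (hcompl : Subgroup.IsComplement' A (Subgroup.zpowers x))
    (hAiso : Nonempty (A ≃* Multiplicative (ZMod (p ^ n) × ZMod (p ^ n))))
    (hx : orderOf x = p ^ (n - 1))
    (hact : ∀ c ∈ A, x⁻¹ * c * x = c ^ (1 + p)) :
    (commutator G : Set G) = {g : G | ∃ c ∈ A, g = c ^ p} ∧
      Subgroup.lowerCentralSeries (⊤ : Subgroup G) n = ⊥ ∧
        Subgroup.lowerCentralSeries (⊤ : Subgroup G) (n - 1) ≠ ⊥ := by
  obtain ⟨e⟩ := hAiso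
  have : IsMulCommutative A :=
    ⟨⟨fun a b => e.injective (by rw [map_mul, map_mul, mul_comm])⟩⟩
  have hexp : Monoid.exponent A = p ^ n := by
    simp [Monoid.exponent_eq_of_mulEquiv e, Monoid.exponent_multiplicative,
      AddMonoid.exponent_prod, ZMod.exponent]
  have hlcs := lowerCentralSeries_succ_eq_powImage hact hcompl
    (orderOf_pos_iff.mp (hx ▸ pow_pos hp.pos _))
  obtain ⟨k, rfl⟩ : ∃ k, n = k + 2 := ⟨n - 2, by omega⟩
  refine ⟨?_, ?_, ?_⟩
  · ext g
    rw [← top_lowerCentralSeries_one, hlcs 0, SetLike.mem_coe, mem_powImage, pow_one]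
    simp only [eq_comm, Set.mem_ofPred_eq]
  · rw [hlcs, powImage_eq_bot_iff, hexp]
  · rw [show k + 2 - 1 = k + 1 by omega, hlcs, Ne, powImage_eq_bot_iff, hexp,
      Nat.pow_dvd_pow_iff_le_right hp.one_lt]
    omega

/-- Let `p` be an odd prime, `n ≥ 2`, and `G = A ⋊ ⟨x⟩` where `A ≅ Z_{p^n} × Z_{p^n}`,
`x` has order `p^{n-1}` and acts on `A` by `c ↦ c^{1+p}`.  Then the commutator subgroup of
`G` is `{c^p | c ∈ A}` and `G` is nilpotent of class exactly `n`. -/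
theorem commutator_and_class_of_construction (p n : ℕ) (hp : p.Prime) (hodd : Odd p)
    (hn : 2 ≤ n) (G : Type*) [Group G] [Finite G] (A : Subgroup G) (x : G)
    (hAnorm : A.Normal)
    (hcompl : Subgroup.IsComplement' A (Subgroup.zpowers x))
    (hAiso : Nonempty (A ≃* Multiplicative (ZMod (p ^ n) × ZMod (p ^ n))))
    (hx : orderOf x = p ^ (n - 1))
    (hact : ∀ c ∈ A, x⁻¹ * c * x = c ^ (1 + p)) :
    (commutator G : Set G) = {g : G | ∃ c ∈ A, g = c ^ p} ∧
      Subgroup.lowerCentralSeries (⊤ : Subgroup G) n = ⊥ ∧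
        Subgroup.lowerCentralSeries (⊤ : Subgroup G) (n - 1) ≠ ⊥ :=
  commutator_and_class_of_construction_general p n hp hn G A x hAnorm hcompl hAiso hx hact
end

section
/- Let p be an odd prime, n ≥ 2, and G = (Z_{p^n} × Z_{p^n}) ⋊ ⟨x⟩ with x of order p^{n-1} acting by c ↦ c^{1+p}. Then for every automorphism φ of G, φ(x) = s·x for some s ∈ A; in particular x⁻¹ φ(x) ∈ A. -/
private lemma binom_aux (a : ℕ) : ∀ s : ℕ, ∃ U : ℕ,
    (1+a)^s = 1 + s*a + Nat.choose s 2 * a^2 + a^3 * U := by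
  intro s
  induction s with
  | zero => exact ⟨0, by norm_num⟩
  | succ s ih =>
    obtain ⟨U, hU⟩ := ih
    refine ⟨U + U*a + Nat.choose s 2, ?_⟩
    rw [pow_succ, hU, Nat.choose_succ_succ, Nat.choose_one_right]
    ring

private lemma one_add_p_pow_pow {p : ℕ} (hp : p.Prime) (hodd : Odd p) :
    ∀ v : ℕ, ∃ w : ℕ, ¬ p ∣ w ∧ (1+p)^(p^v) = 1 + p^(v+1) * w := by
  have hp2 : 2 < p := lt_of_le_of_ne hp.two_le
    (by rintro rfl; exact (Nat.not_odd_iff_even.mpr even_two) hodd)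
  intro v
  induction v with
  | zero => exact ⟨1, hp.one_lt.ne' ∘ fun h => (Nat.dvd_one.mp h), by norm_num⟩
  | succ v ih =>
    obtain ⟨w, hw, hw2⟩ := ih
    obtain ⟨U, hU⟩ := binom_aux (p^(v+1) * w) p
    -- p ∣ p^v * w^2 * (choose p 2) + p^(2*v+1) * w^3 * U  (as p ∣ choose p 2 when v = 0)
    have hC : p ∣ Nat.choose p 2 := hp.dvd_choose_self (by norm_num) hp2
    have hkey : ∃ K, p^v * w^2 * Nat.choose p 2 + p^(2*v+1) * w^3 * U = p * K := by
      rcases Nat.eq_zero_or_pos v with rfl | hv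
      · obtain ⟨C', hC'⟩ := hC
        exact ⟨w^2 * C' + w^3 * U, by rw [hC']; ring⟩
      · obtain ⟨v', rfl⟩ := Nat.exists_eq_add_of_le hv
        exact ⟨p^v' * w^2 * Nat.choose p 2 + p^(2*(1+v')) * w^3 * U, by ring⟩
    obtain ⟨K, hK⟩ := hkey
    refine ⟨w + p * K, fun h => hw ((Nat.dvd_add_right ⟨K, rfl⟩).mp (by rwa [Nat.add_comm] at h)), ?_⟩
    have : (1+p)^(p^(v+1)) = ((1+p)^(p^v))^p := by rw [← pow_mul, pow_succ]
    rw [this, hw2, hU, ← hK]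
    ring

private lemma lte_lemma {p : ℕ} (hp : p.Prime) (hodd : Odd p) {k : ℕ} (hk : 0 < k) :
    ∃ v u : ℕ, p ^ v ∣ k ∧ ¬ p ∣ u ∧ (1+p)^k = 1 + p^(v+1) * u := by
  set v := k.factorization p with hv
  set s := k / p ^ v with hs
  have hks : p ^ v * s = k := Nat.ordProj_mul_ordCompl_eq_self k p
  have hps : ¬ p ∣ s := Nat.not_dvd_ordCompl hp hk.ne'
  obtain ⟨w, hw, hw2⟩ := one_add_p_pow_pow hp hodd v
  obtain ⟨U, hU⟩ := binom_aux (p^(v+1) * w) s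
  refine ⟨v, s*w + (Nat.choose s 2 * (p^(v+1) * w^2) + p^(2*(v+1)) * w^3 * U),
    ⟨s, hks.symm⟩, ?_, ?_⟩
  · have hT : p ∣ (Nat.choose s 2 * (p^(v+1) * w^2) + p^(2*(v+1)) * w^3 * U) := by
      refine Nat.dvd_add (Dvd.dvd.mul_left ?_ _) (Dvd.dvd.mul_right (Dvd.dvd.mul_right ?_ _) _)
      · exact Dvd.dvd.mul_right (dvd_pow_self p (Nat.succ_ne_zero v)) _
      · exact dvd_pow_self p (by omega)
    intro h
    rw [Nat.add_comm] at h
    rcases (Nat.Prime.dvd_mul hp).mp ((Nat.dvd_add_right hT).mp h) with h1 | h1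
    · exact hps h1
    · exact hw h1
  · have : (1+p)^k = ((1+p)^(p^v))^s := by rw [← pow_mul, hks]
    rw [this, hw2, hU]
    ring

private lemma thmA_decomp {G : Type*} [Group G] {A : Subgroup G} {x : G}
    (hcompl : Subgroup.IsComplement' A (Subgroup.zpowers x)) (hord : 0 < orderOf x) (g : G) :
    ∃ a ∈ A, ∃ k : ℕ, k < orderOf x ∧ g = a * x ^ k := by
  obtain ⟨⟨a, z⟩, hpz, -⟩ := hcompl.existsUnique g
  obtain ⟨m, hm⟩ := Subgroup.mem_zpowers_iff.mp z.2
  have hne : ((orderOf x : ℤ)) ≠ 0 := by exact_mod_cast hord.ne'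
  have h0 : (0:ℤ) ≤ m % (orderOf x : ℤ) := Int.emod_nonneg m hne
  have hlt : m % (orderOf x : ℤ) < (orderOf x : ℤ) := Int.emod_lt_of_pos m (by exact_mod_cast hord)
  refine ⟨a, a.2, (m % (orderOf x : ℤ)).toNat, ?_, ?_⟩
  · omega
  · have : x ^ ((m % (orderOf x : ℤ)).toNat) = (z : G) := by
      rw [← hm, ← zpow_natCast, Int.toNat_of_nonneg h0, zpow_mod_orderOf]
    rw [this, hpz]

private lemma thmA_conj_pow {G : Type*} [Group G] {A : Subgroup G} {x : G} {p : ℕ}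
    (hact : ∀ c ∈ A, x⁻¹ * c * x = c ^ (1 + p)) :
    ∀ j : ℕ, ∀ c ∈ A, (x ^ j)⁻¹ * c * x ^ j = c ^ ((1+p) ^ j) := by
  intro j
  induction j with
  | zero => intro c _; simp
  | succ j ih =>
    intro c hc
    have h2 := hact (c ^ ((1+p)^j)) (Subgroup.pow_mem A hc _)
    calc (x ^ (j+1))⁻¹ * c * x ^ (j+1)
        = x⁻¹ * ((x ^ j)⁻¹ * c * x ^ j) * x := by rw [pow_succ]; group
      _ = x⁻¹ * c ^ ((1+p)^j) * x := by rw [ih c hc]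
      _ = (c ^ ((1+p)^j)) ^ (1+p) := h2
      _ = c ^ ((1+p) ^ (j+1)) := by rw [← pow_mul, ← pow_succ]

private lemma thmA_ord_prop {N : ℕ} [NeZero N] {G : Type*} [Group G] {A : Subgroup G}
    (e : A ≃* Multiplicative (ZMod N × ZMod N)) (d : A)
    (hd : (Multiplicative.toAdd (e d)).1 = 1 ∨ (Multiplicative.toAdd (e d)).2 = 1)
    {m : ℕ} (hm : (d : G) ^ m = 1) : N ∣ m := by
  have h1 : d ^ m = 1 := by
    ext; simpa using hm
  have h2 : (e d) ^ m = 1 := by rw [← map_pow, h1, map_one]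
  have h3 : m • (Multiplicative.toAdd (e d)) = 0 := by
    rw [← toAdd_pow, h2]; rfl
  have h4 : ((m : ZMod N)) = 0 := by
    rcases hd with hd | hd
    · have := congrArg Prod.fst h3
      simpa [hd] using this
    · have := congrArg Prod.snd h3
      simpa [hd] using this
  exact (ZMod.natCast_eq_zero_iff m N).mp h4

private lemma thmA_pow_dvd_aux {p n v u : ℕ} (hp : p.Prime) (hpu : ¬ p ∣ u)
    (h : p^n ∣ p^(v+1) * u) : n ≤ v + 1 := by
  by_contra hlt
  push_neg at hlt
  have h2 : p^(v+1) * p ∣ p^(v+1) * u :=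
    dvd_trans (by rw [← pow_succ]; exact pow_dvd_pow p (by omega)) h
  exact hpu ((Nat.mul_dvd_mul_iff_left (pow_pos hp.pos (v+1))).mp h2)

open Multiplicative in
private lemma thmA_mapsto (p n : ℕ) (hp : p.Prime) (hodd : Odd p)
    (hn : 2 ≤ n) (G : Type*) [Group G] (A : Subgroup G) (x : G)
    (hAnorm : A.Normal)
    (hcompl : Subgroup.IsComplement' A (Subgroup.zpowers x))
    (hx : orderOf x = p ^ (n - 1))
    (hact : ∀ c ∈ A, x⁻¹ * c * x = c ^ (1 + p))
    (e : A ≃* Multiplicative (ZMod (p ^ n) × ZMod (p ^ n)))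
    (ψ : G ≃* G) : ∀ c ∈ A, ψ c ∈ A := by
  haveI := hAnorm
  haveI : NeZero (p ^ n) := ⟨pow_ne_zero n hp.pos.ne'⟩
  have hordpos : 0 < orderOf x := by rw [hx]; exact pow_pos hp.pos _
  have hAcomm : ∀ a b : A, a * b = b * a := fun a b =>
    e.injective (by rw [map_mul, map_mul, mul_comm])
  have hAcomm' : ∀ a ∈ A, ∀ b ∈ A, a * b = b * a := fun a ha b hb =>
    congrArg Subtype.val (hAcomm ⟨a, ha⟩ ⟨b, hb⟩)
  set P := p ^ (n - 1) with hP
  let π : G →* G ⧸ A := QuotientGroup.mk' A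
  have hπ1 : ∀ g : G, π g = 1 ↔ g ∈ A := fun g => QuotientGroup.eq_one_iff g
  have hxP : x ^ P = 1 := by rw [← hx]; exact pow_orderOf_eq_one x
  set ξ := π x with hξ
  have hξP : ξ ^ (P : ℤ) = 1 := by rw [zpow_natCast, ← map_pow, hxP, map_one]
  -- the element d of order p^n with ψ d ∈ A
  have hd : ∃ d : A, (∀ m : ℕ, (d : G) ^ m = 1 → p ^ n ∣ m) ∧ ψ d ∈ A := by
    set u1 : A := e.symm (ofAdd (1, 0)) with hu1
    set u2 : A := e.symm (ofAdd (0, 1)) with hu2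
    obtain ⟨a1, ha1, i, hi, hdec1⟩ := thmA_decomp hcompl hordpos (ψ u1)
    obtain ⟨a2, ha2, j, hj, hdec2⟩ := thmA_decomp hcompl hordpos (ψ u2)
    -- solving linear congruences
    have solve : ∀ i j : ℕ, Nat.gcd i P ∣ j → ∃ r : ℤ, (P : ℤ) ∣ ((j : ℤ) - r * i) := by
      intro i j hdvd
      obtain ⟨q, hq⟩ := hdvd
      refine ⟨Int.gcdA i P * (q : ℤ), ⟨Int.gcdB i P * (q : ℤ), ?_⟩⟩
      have hgcd : ((Nat.gcd i P : ℕ) : ℤ) = i * Int.gcdA (i:ℤ) (P:ℤ) + P * Int.gcdB (i:ℤ) (P:ℤ) := by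
        rw [← Int.gcd_natCast_natCast]; exact Int.gcd_eq_gcd_ab _ _
      have hjz : (j : ℤ) = (Nat.gcd i P : ℤ) * (q : ℤ) := by exact_mod_cast hq
      linear_combination hjz + (q : ℤ) * hgcd
    -- the generic construction
    have build : ∀ (w1 w2 : A) (b1 b2 : G) (i j : ℕ), b1 ∈ A → b2 ∈ A →
        ψ w1 = b1 * x ^ i → ψ w2 = b2 * x ^ j → Nat.gcd i P ∣ j →
        ∀ r : ℤ, (P : ℤ) ∣ ((j : ℤ) - r * i) → ψ ↑(w2 * w1 ^ (-r)) ∈ A := by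
      intro w1 w2 b1 b2 i j hb1 hb2 hw1 hw2 hdvd r hr
      obtain ⟨q', hq'⟩ := hr
      rw [← hπ1]
      have hcoe : ((w2 * w1 ^ (-r) : A) : G) = (w2 : G) * ((w1 : G)) ^ (-r) := by push_cast; rfl
      have hψ : ψ ↑(w2 * w1 ^ (-r)) = ψ ↑w2 * (ψ ↑w1) ^ (-r) := by rw [hcoe, map_mul, map_zpow]
      have hπ2 : π (ψ ↑w2) = ξ ^ (j : ℤ) := by
        rw [hw2, map_mul, (hπ1 b2).mpr hb2, one_mul, map_pow, zpow_natCast]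
      have hπ1' : π (ψ ↑w1) = ξ ^ (i : ℤ) := by
        rw [hw1, map_mul, (hπ1 b1).mpr hb1, one_mul, map_pow, zpow_natCast]
      rw [hψ, map_mul, map_zpow, hπ2, hπ1', ← zpow_mul, ← zpow_add]
      have : (j : ℤ) + (i : ℤ) * (-r) = (P : ℤ) * q' := by linarith [hq']
      rw [this, zpow_mul, hξP, one_zpow]
    -- comparability of gcds
    have hgi : ∃ a, Nat.gcd i P = p ^ a := by
      obtain ⟨a, -, ha⟩ := (Nat.dvd_prime_pow hp).mp (hP ▸ Nat.gcd_dvd_right i P)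
      exact ⟨a, ha⟩
    have hgj : ∃ b, Nat.gcd j P = p ^ b := by
      obtain ⟨b, -, hb⟩ := (Nat.dvd_prime_pow hp).mp (hP ▸ Nat.gcd_dvd_right j P)
      exact ⟨b, hb⟩
    obtain ⟨ga, hga⟩ := hgi
    obtain ⟨gb, hgb⟩ := hgj
    -- case split
    rcases le_total ga gb with hab | hab
    · -- gcd i P ∣ gcd j P ∣ j
      have hdvd : Nat.gcd i P ∣ j := dvd_trans (hga ▸ hgb ▸ pow_dvd_pow p hab) (Nat.gcd_dvd_left j P)
      obtain ⟨r, hr⟩ := solve i j hdvd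
      refine ⟨u2 * u1 ^ (-r), ?_, build u1 u2 a1 a2 i j ha1 ha2 hdec1 hdec2 hdvd r hr⟩
      intro m hm
      refine thmA_ord_prop e _ (Or.inr ?_) hm
      rw [map_mul, map_zpow, hu1, hu2, e.apply_symm_apply, e.apply_symm_apply,
        ← ofAdd_zsmul, ← ofAdd_add]
      simp
    · have hdvd : Nat.gcd j P ∣ i := dvd_trans (hgb ▸ hga ▸ pow_dvd_pow p hab) (Nat.gcd_dvd_left i P)
      obtain ⟨r, hr⟩ := solve j i hdvd
      refine ⟨u1 * u2 ^ (-r), ?_, build u2 u1 a2 a1 j i ha2 ha1 hdec2 hdec1 hdvd r hr⟩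
      intro m hm
      refine thmA_ord_prop e _ (Or.inl ?_) hm
      rw [map_mul, map_zpow, hu1, hu2, e.apply_symm_apply, e.apply_symm_apply,
        ← ofAdd_zsmul, ← ofAdd_add]
      simp
  -- main argument
  intro c hc
  by_contra hout
  obtain ⟨a, ha, k, hk, hdecc⟩ := thmA_decomp hcompl hordpos (ψ c)
  rw [hx] at hk
  have hk0 : k ≠ 0 := by
    rintro rfl
    rw [hdecc, pow_zero, mul_one] at hout
    exact hout ha
  obtain ⟨d, hdord, hdmem⟩ := hd
  have hcomm : ψ ↑d * ψ c = ψ c * ψ ↑d := by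
    rw [← map_mul, ← map_mul, hAcomm' ↑d d.2 c hc]
  have h2 : ψ ↑d * a = a * ψ ↑d := hAcomm' _ hdmem a ha
  have h1 : ψ ↑d * (a * x ^ k) = a * x ^ k * ψ ↑d := by rw [← hdecc]; exact hcomm
  have h1' : a * (ψ ↑d * x ^ k) = a * (x ^ k * ψ ↑d) := by
    calc a * (ψ ↑d * x ^ k) = (ψ ↑d * a) * x ^ k := by rw [h2, mul_assoc]
      _ = ψ ↑d * (a * x ^ k) := by rw [mul_assoc]
      _ = (a * x ^ k) * ψ ↑d := h1
      _ = a * (x ^ k * ψ ↑d) := by rw [mul_assoc]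
  have h3 : ψ ↑d * x ^ k = x ^ k * ψ ↑d := mul_left_cancel h1'
  have h4 : (x ^ k)⁻¹ * ψ ↑d * x ^ k = ψ ↑d := by
    rw [mul_assoc, h3, ← mul_assoc, inv_mul_cancel, one_mul]
  have h5 : (ψ ↑d) ^ ((1+p) ^ k) = ψ ↑d := by
    rw [← thmA_conj_pow hact k (ψ ↑d) hdmem, h4]
  obtain ⟨v, u, hvk, hpu, hlte⟩ := lte_lemma hp hodd (Nat.pos_of_ne_zero hk0)
  have h6 : (ψ ↑d) ^ (p ^ (v+1) * u) = 1 := by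
    have := h5
    rw [hlte, pow_add, pow_one] at this
    exact mul_left_cancel (by rw [this, mul_one])
  have h7 : (↑d : G) ^ (p ^ (v+1) * u) = 1 := by
    apply ψ.injective
    rw [map_pow, map_one]
    exact h6
  have h8 : p ^ n ∣ p ^ (v+1) * u := hdord _ h7
  have h9 : n ≤ v + 1 := thmA_pow_dvd_aux hp hpu h8
  have h10 : p ^ v ≤ k := Nat.le_of_dvd (Nat.pos_of_ne_zero hk0) hvk
  have h11 : v < n - 1 := by
    have : p ^ v < p ^ (n-1) := lt_of_le_of_lt h10 hk
    exact (Nat.pow_lt_pow_iff_right hp.one_lt).mp this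
  omega

/-- Let `p` be an odd prime, `n ≥ 2`, and `G = A ⋊ ⟨x⟩` where `A ≅ Z_{p^n} × Z_{p^n}`,
`x` has order `p^{n-1}` and acts on `A` by `c ↦ c^{1+p}`.  Then for every automorphism `φ`
of `G` we have `φ(x) = s * x` for some `s ∈ A`; in particular `x⁻¹ φ(x) ∈ A`. -/
theorem image_of_x_under_automorphism (p n : ℕ) (hp : p.Prime) (hodd : Odd p)
    (hn : 2 ≤ n) (G : Type*) [Group G] [Finite G] (A : Subgroup G) (x : G)
    (hAnorm : A.Normal)
    (hcompl : Subgroup.IsComplement' A (Subgroup.zpowers x))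
    (hAiso : Nonempty (A ≃* Multiplicative (ZMod (p ^ n) × ZMod (p ^ n))))
    (hx : orderOf x = p ^ (n - 1))
    (hact : ∀ c ∈ A, x⁻¹ * c * x = c ^ (1 + p)) :
    ∀ φ : G ≃* G, (∃ s ∈ A, φ x = s * x) ∧ x⁻¹ * φ x ∈ A := by
  obtain ⟨e⟩ := hAiso
  haveI := hAnorm
  haveI : NeZero (p ^ n) := ⟨pow_ne_zero n hp.pos.ne'⟩
  have hordpos : 0 < orderOf x := by rw [hx]; exact pow_pos hp.pos _
  have hAcomm : ∀ a b : A, a * b = b * a := fun a b =>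
    e.injective (by rw [map_mul, map_mul, mul_comm])
  have hAcomm' : ∀ a ∈ A, ∀ b ∈ A, a * b = b * a := fun a ha b hb =>
    congrArg Subtype.val (hAcomm ⟨a, ha⟩ ⟨b, hb⟩)
  intro φ
  have hmap := thmA_mapsto p n hp hodd hn G A x hAnorm hcompl hx hact e
  set u1 : A := e.symm (Multiplicative.ofAdd (1, 0)) with hu1
  have hu1e : e u1 = Multiplicative.ofAdd (1, 0) := e.apply_symm_apply _
  have hu1ord : ∀ m : ℕ, (↑u1 : G) ^ m = 1 → p ^ n ∣ m := fun m hm =>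
    thmA_ord_prop e u1 (Or.inl (by rw [hu1e]; rfl)) hm
  have hc0A : φ.symm ↑u1 ∈ A := hmap φ.symm ↑u1 u1.2
  have hφc0 : φ (φ.symm ↑u1) = ↑u1 := φ.apply_symm_apply _
  obtain ⟨a, ha, k, hk, hdec⟩ := thmA_decomp hcompl hordpos (φ x)
  rw [hx] at hk
  have h0 := hact _ hc0A
  have h1 : (φ x)⁻¹ * ↑u1 * φ x = (↑u1 : G) ^ (1+p) := by
    have h := congrArg φ h0
    rw [map_mul, map_mul, map_inv, map_pow, hφc0] at h
    exact h
  have ha' : a⁻¹ * ↑u1 * a = (↑u1 : G) := by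
    rw [mul_assoc, hAcomm' ↑u1 u1.2 a ha, ← mul_assoc, inv_mul_cancel, one_mul]
  have h2 : (x ^ k)⁻¹ * (a⁻¹ * ↑u1 * a) * x ^ k = (↑u1 : G) ^ (1+p) := by
    rw [hdec] at h1
    rw [← h1]; group
  rw [ha'] at h2
  have h3 : (↑u1 : G) ^ ((1+p) ^ k) = (↑u1 : G) ^ (1+p) := by
    rw [← thmA_conj_pow hact k ↑u1 u1.2, h2]
  -- k cannot be 0
  have hk0 : k ≠ 0 := by
    rintro rfl
    rw [pow_zero, pow_one] at h3
    have hp1 : (↑u1 : G) ^ p = 1 := by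
      have : (↑u1 : G) * 1 = ↑u1 * (↑u1 : G) ^ p := by
        rw [mul_one]
        conv_lhs => rw [h3]
        rw [pow_add, pow_one]
      exact (mul_left_cancel this).symm
    have hdvd := hu1ord p hp1
    have hle := Nat.le_of_dvd hp.pos hdvd
    have h2n : p ^ 2 ≤ p ^ n := Nat.pow_le_pow_right hp.pos hn
    have : p ^ 2 = p * p := by ring
    nlinarith [hp.two_le]
  -- k must be 1
  have hk1 : k = 1 := by
    by_contra hne
    have hk2 : 1 ≤ k - 1 := by omega
    obtain ⟨v, u, hvk, hpu, hlte⟩ := lte_lemma hp hodd (show 0 < k - 1 by omega)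
    have hkk : (1+p) ^ k = (1+p) + (1+p) * (p ^ (v+1) * u) := by
      have : (1+p) ^ k = (1+p) * (1+p) ^ (k-1) := by
        rw [← pow_succ']
        congr 1
        omega
      rw [this, hlte]
      ring
    have h4 : (↑u1 : G) ^ ((1+p) * (p ^ (v+1) * u)) = 1 := by
      rw [hkk, pow_add] at h3
      exact mul_left_cancel (show (↑u1:G)^(1+p) * (↑u1:G)^((1+p)*(p^(v+1)*u)) = (↑u1:G)^(1+p) * 1 by
        rw [h3, mul_one])
    have hdvd : p ^ n ∣ (1+p) * (p ^ (v+1) * u) := hu1ord _ h4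
    have hcop : Nat.Coprime (p ^ n) (1+p) := by
      have : Nat.Coprime p (1+p) := by simp [Nat.coprime_add_self_right]
      exact this.pow_left n
    have hdvd2 : p ^ n ∣ p ^ (v+1) * u := hcop.dvd_of_dvd_mul_left hdvd
    have h9 : n ≤ v + 1 := thmA_pow_dvd_aux hp hpu hdvd2
    have h10 : p ^ v ≤ k - 1 := Nat.le_of_dvd (by omega) hvk
    have h11 : v < n - 1 := by
      have : p ^ v < p ^ (n-1) := lt_of_le_of_lt h10 (by omega)
      exact (Nat.pow_lt_pow_iff_right hp.one_lt).mp this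
    omega
  subst hk1
  rw [pow_one] at hdec
  refine ⟨⟨a, ha, hdec⟩, ?_⟩
  rw [hdec, ← mul_assoc]
  simpa using hAnorm.conj_mem a ha x⁻¹
end

section
/- (Theorem A) For every integer n ≥ 1 and every odd prime p, there exists a finite p-group G, nilpotent of class exactly n, such that for every automorphism φ of G the set [G,φ] = {g⁻¹ φ(g) | g ∈ G} is a subgroup of G. -/
/-- The property that for every automorphism `φ` of `G`, the twisted conjugacy class of the
identity `[G,φ] = {g⁻¹ φ(g) | g ∈ G}` is a subgroup of `G`. -/
def TwistedClassesAreSubgroups (G : Type*) [Group G] : Prop :=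
  ∀ φ : G ≃* G, ∃ H : Subgroup G, (H : Set G) = {g : G | ∃ a : G, g = a⁻¹ * φ a}

/-- `G` is a finite `p`-group, nilpotent of class exactly `n`, in which every twisted
conjugacy class of the identity under an automorphism is a subgroup. -/
def IsGoodPGroup (p n : ℕ) (G : Type*) [Group G] : Prop :=
  Finite G ∧ IsPGroup p G ∧
    (⊤ : Subgroup G).lowerCentralSeries n = ⊥ ∧ (⊤ : Subgroup G).lowerCentralSeries (n - 1) ≠ ⊥ ∧
    TwistedClassesAreSubgroups G

/-!
Write `G = A ⋊ ⟨t⟩` with `A = (ℤ/p^(m+1))²`, `t` of order `p^m` acting on `A` by `u = 1 + p`.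
Since `u^j - 1 ∈ pℤ`, commutators land in `pA` and `γ_{k+1}(G) = p^k A`, so `G` has class `m + 1`.

For odd `p`, lifting the exponent gives `u^j - 1 = p^(v_p(j)+1) · unit`. Hence an element outside
`A` has a small centralizer in `A`, and counting shows that `A` is the only abelian subgroup of
its order; so every automorphism `φ` restricts to an additive automorphism `β` of `A`.
Comparing `φ(t a t⁻¹) = φ(a)^u` gives `φ(t) ∈ A t`, and `φ(t)^(p^m) = 1` forces
`φ(t) = b t b⁻¹` for some `b ∈ A`. Then `x⁻¹ φ(x) = (β - 1)(u^j a) + (u^j - 1) b` for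
`x = a t^(-j)`, and since `j ↦ u^j - 1` maps onto `pℤ/p^(m+1)`, the set `[G,φ]` is the subgroup
`(β - 1)(A) + ⟨p b⟩` of `A`.
-/

open scoped commutatorElement Pointwise

namespace TwistedPGroup

section OneAddPrime

variable {p m : ℕ}

theorem one_add_pow_pow_eq_one : (1 + p : ZMod (p ^ (m + 1))) ^ p ^ m = 1 := by
  have h := dvd_sub_pow_of_dvd_sub (R := ZMod (p ^ (m + 1))) (p := p) (a := 1 + p) (b := 1)
    (by simp) m
  rwa [← Nat.cast_pow, ZMod.natCast_self, zero_dvd_iff, one_pow, sub_eq_zero] at h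

theorem pow_nsmul_natCast_mul_eq_zero (r : ZMod (p ^ (m + 1))) :
    p ^ m • ((p : ZMod (p ^ (m + 1))) * r) = 0 := by
  rw [nsmul_eq_mul, ← mul_assoc, Nat.cast_pow, ← pow_succ, ← Nat.cast_pow, ZMod.natCast_self,
    zero_mul]

theorem card_nsmul_eq_zero_le {N k : ℕ} [NeZero N] (hk : 0 < k) :
    Nat.card {x : ZMod N // k • x = 0} ≤ k := by
  classical
  rw [Nat.card_eq_fintype_card, Fintype.card_subtype]
  exact IsAddCyclic.card_nsmul_eq_zero_le hk

theorem card_prod_nsmul_eq_zero_le {N k : ℕ} [NeZero N] (hk : 0 < k) :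
    Nat.card {x : ZMod N × ZMod N // k • x = 0} ≤ k * k := by
  have e : {x : ZMod N × ZMod N // k • x = 0} ≃
      {x : ZMod N // k • x = 0} × {x : ZMod N // k • x = 0} :=
    (Equiv.subtypeEquivRight fun x => by simp [Prod.ext_iff]).trans Equiv.subtypeProdEquivProd
  rw [Nat.card_congr e, Nat.card_prod]
  exact Nat.mul_le_mul (card_nsmul_eq_zero_le hk) (card_nsmul_eq_zero_le hk)

theorem mem_smul_top_iff {R M : Type*} [Monoid R] [AddGroup M] [DistribMulAction R M] {r : R}
    {a : M} : a ∈ r • (⊤ : AddSubgroup M) ↔ ∃ x, a = r • x := by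
  simp [AddSubgroup.mem_smul_pointwise_iff_exists, eq_comm]

variable [hp : Fact p.Prime]

theorem exists_one_add_pow_eq (hodd : Odd p) {k : ℕ} (hk : k ≠ 0) :
    ∃ c, ¬ p ∣ c ∧ (1 + p) ^ k = 1 + p ^ (padicValNat p k + 1) * c := by
  have hp1 := hp.out.one_lt
  have hlt : 1 < (1 + p) ^ k := Nat.one_lt_pow hk (by omega)
  have hndvd : ¬ p ∣ 1 + p := fun h => hp1.ne' (Nat.dvd_one.1 ((Nat.dvd_add_left dvd_rfl).1 h))
  have hval : padicValNat p ((1 + p) ^ k - 1) = padicValNat p k + 1 := by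
    have := padicValNat.pow_sub_pow (x := 1 + p) (y := 1) hodd (by omega) (by simp) hndvd hk
    simpa [padicValNat.self hp1, add_comm] using this
  refine ⟨((1 + p) ^ k - 1) / p ^ ((1 + p) ^ k - 1).factorization p,
    Nat.not_dvd_ordCompl hp.out (by omega), ?_⟩
  rw [← hval, ← Nat.factorization_def _ hp.out, Nat.ordProj_mul_ordCompl_eq_self]
  omega

theorem isUnit_natCast_of_not_dvd {c : ℕ} (k : ℕ) (hc : ¬ p ∣ c) : IsUnit (c : ZMod (p ^ k)) :=
  (ZMod.isUnit_iff_coprime _ _).2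
    ((Nat.coprime_comm.1 ((hp.out.coprime_iff_not_dvd).2 hc)).pow_right k)

theorem exists_isUnit_geom_sum_eq (hodd : Odd p) : ∃ w, IsUnit w ∧
    ∑ j ∈ Finset.range (p ^ m), (1 + p : ZMod (p ^ (m + 1))) ^ j =
      (p : ZMod (p ^ (m + 1))) ^ m * w := by
  obtain ⟨c, hc, hce⟩ := exists_one_add_pow_eq hodd (pow_ne_zero m hp.out.ne_zero)
  rw [padicValNat.prime_pow] at hce
  have hsum := geom_sum_mul_add p (p ^ m)
  rw [add_comm p 1, hce, add_comm _ 1, add_left_cancel_iff, pow_succ, mul_assoc, mul_comm p c,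
    ← mul_assoc, Nat.mul_left_inj hp.out.ne_zero] at hsum
  refine ⟨c, isUnit_natCast_of_not_dvd _ hc, ?_⟩
  simpa using congrArg (Nat.cast : ℕ → ZMod (p ^ (m + 1))) hsum

theorem exists_eq_mul_of_pow_mul_eq_zero {x : ZMod (p ^ (m + 1))}
    (h : (p : ZMod (p ^ (m + 1))) ^ m * x = 0) : ∃ y, x = p * y := by
  rw [← ZMod.natCast_zmod_val x, ← Nat.cast_pow, ← Nat.cast_mul, ZMod.natCast_eq_zero_iff] at h
  obtain ⟨y, hy⟩ : p ∣ x.val :=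
    (Nat.mul_dvd_mul_iff_left (pow_pos hp.out.pos m)).1 (by rwa [← pow_succ])
  exact ⟨y, by rw [← ZMod.natCast_zmod_val x, hy, Nat.cast_mul]⟩

end OneAddPrime

section Act

variable {p m : ℕ}

def act (i : ZMod (p ^ m)) : ZMod (p ^ (m + 1)) := (1 + p) ^ i.val

theorem act_natCast (k : ℕ) : act (k : ZMod (p ^ m)) = (1 + p) ^ k := by
  rw [act, ZMod.val_natCast]
  conv_rhs => rw [← Nat.div_add_mod k (p ^ m), pow_add, pow_mul, one_add_pow_pow_eq_one, one_pow,
    one_mul]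

theorem act_zero : act (0 : ZMod (p ^ m)) = 1 := by
  simpa using act_natCast (p := p) (m := m) 0

theorem act_one : act (1 : ZMod (p ^ m)) = 1 + p := by
  simpa using act_natCast (p := p) (m := m) 1

theorem dvd_act_sub_one (i : ZMod (p ^ m)) : (p : ZMod (p ^ (m + 1))) ∣ act i - 1 := by
  simpa [act] using sub_dvd_pow_sub_pow (1 + p : ZMod (p ^ (m + 1))) 1 i.val

theorem act_add [NeZero p] (i j : ZMod (p ^ m)) : act (i + j) = act i * act j := by
  rw [← ZMod.natCast_zmod_val i, ← ZMod.natCast_zmod_val j, ← Nat.cast_add]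
  simp only [act_natCast, pow_add]

theorem act_neg_mul_act [NeZero p] (i : ZMod (p ^ m)) : act (-i) * act i = 1 := by
  rw [← act_add, neg_add_cancel, act_zero]

variable [hp : Fact p.Prime]

theorem act_injective (hodd : Odd p) :
    Function.Injective (act : ZMod (p ^ m) → ZMod (p ^ (m + 1))) := by
  intro i j h
  have hord := ZMod.orderOf_one_add_prime hp.out (hodd.ne_two_of_dvd_nat dvd_rfl) m
  have hfin : IsOfFinOrder (1 + p : ZMod (p ^ (m + 1))) :=
    orderOf_pos_iff.1 (hord ▸ pow_pos hp.out.pos m)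
  rw [act, act, hfin.pow_inj_mod, hord, Nat.mod_eq_of_lt (ZMod.val_lt i),
    Nat.mod_eq_of_lt (ZMod.val_lt j)] at h
  exact ZMod.val_injective _ h

theorem act_sub_one_eq (hodd : Odd p) {i : ZMod (p ^ m)} (hi : i ≠ 0) :
    ∃ w, IsUnit w ∧ act i - 1 = (p : ZMod (p ^ (m + 1))) ^ (padicValNat p i.val + 1) * w := by
  obtain ⟨c, hc, hce⟩ := exists_one_add_pow_eq hodd ((ZMod.val_ne_zero i).2 hi)
  refine ⟨c, isUnit_natCast_of_not_dvd _ hc, ?_⟩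
  have hcast : (1 + p : ZMod (p ^ (m + 1))) ^ i.val = 1 + p ^ (padicValNat p i.val + 1) * c := by
    simpa using congrArg (Nat.cast : ℕ → ZMod (p ^ (m + 1))) hce
  rw [act, hcast]
  ring

/-- `act` is injective and `act i - 1 ∈ pℤ`, so counting shows that it hits all of `1 + pℤ`. -/
theorem exists_act_eq (hodd : Odd p) (r : ZMod (p ^ (m + 1))) :
    ∃ i : ZMod (p ^ m), act i = 1 + p * r := by
  let F : ZMod (p ^ m) → {y : ZMod (p ^ (m + 1)) // p ^ m • y = 0} := fun i =>
    ⟨act i - 1, by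
      obtain ⟨c, hc⟩ := dvd_act_sub_one i
      rw [hc]
      exact pow_nsmul_natCast_mul_eq_zero c⟩
  have hF : F.Injective := fun i j h =>
    act_injective hodd (sub_left_inj.1 (congrArg Subtype.val h))
  obtain ⟨i, hi⟩ := (hF.bijective_of_nat_card_le (by
    rw [Nat.card_zmod]; exact card_nsmul_eq_zero_le (pow_pos hp.out.pos m))).2
      ⟨p * r, pow_nsmul_natCast_mul_eq_zero r⟩
  exact ⟨i, sub_eq_iff_eq_add'.1 (congrArg Subtype.val hi)⟩

end Act

abbrev Vec (p m : ℕ) := ZMod (p ^ (m + 1)) × ZMod (p ^ (m + 1))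

/-- `⟨a, i⟩` stands for `a tⁱ` in `(ℤ/p^(m+1))² ⋊ ℤ/p^m`, where `t` acts by multiplication
by `1 + p`; this is the group of the paper with `n = m + 1`. -/
@[ext]
structure SdProd (p m : ℕ) where
  a : Vec p m
  i : ZMod (p ^ m)

namespace SdProd

section Group

variable {p m : ℕ}

instance : Mul (SdProd p m) := ⟨fun g h => ⟨g.a + act g.i • h.a, g.i + h.i⟩⟩
instance : One (SdProd p m) := ⟨⟨0, 0⟩⟩
instance : Inv (SdProd p m) := ⟨fun g => ⟨-(act (-g.i) • g.a), -g.i⟩⟩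

@[simp] theorem mul_a (g h : SdProd p m) : (g * h).a = g.a + act g.i • h.a := rfl
@[simp] theorem mul_i (g h : SdProd p m) : (g * h).i = g.i + h.i := rfl
@[simp] theorem one_a : (1 : SdProd p m).a = 0 := rfl
@[simp] theorem one_i : (1 : SdProd p m).i = 0 := rfl
@[simp] theorem inv_a (g : SdProd p m) : g⁻¹.a = -(act (-g.i) • g.a) := rfl
@[simp] theorem inv_i (g : SdProd p m) : g⁻¹.i = -g.i := rfl

theorem mk_zero_mul (a b : Vec p m) (i : ZMod (p ^ m)) :
    (⟨a, 0⟩ : SdProd p m) * ⟨b, i⟩ = ⟨a + b, i⟩ := by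
  ext : 1 <;> simp [act_zero]

def gen : SdProd p m := ⟨0, 1⟩

theorem mk_zero_commute_iff (c : Vec p m) (h : SdProd p m) :
    Commute (⟨c, 0⟩ : SdProd p m) h ↔ act h.i • c = c := by
  rw [Commute, SemiconjBy, SdProd.ext_iff]
  simp [act_zero, add_comm h.a, eq_comm]

variable [NeZero p]

instance : Group (SdProd p m) := .ofLeftAxioms
  (fun g h k => by ext <;> simp [act_add, mul_smul, add_assoc])
  (fun g => by ext <;> simp [act_zero])
  (fun g => by ext <;> simp)

def equivProd : SdProd p m ≃ Vec p m × ZMod (p ^ m) where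
  toFun g := (g.a, g.i)
  invFun x := ⟨x.1, x.2⟩

instance : Finite (SdProd p m) := .of_equiv _ equivProd.symm

theorem isPGroup : IsPGroup p (SdProd p m) := by
  refine IsPGroup.of_card (n := (m + 1) + (m + 1) + m) ?_
  rw [Nat.card_congr equivProd, Nat.card_prod, Nat.card_prod, Nat.card_zmod, Nat.card_zmod,
    ← pow_add, ← pow_add]

theorem mk_zero_pow (a : Vec p m) (k : ℕ) :
    (⟨a, 0⟩ : SdProd p m) ^ k = ⟨(k : ZMod (p ^ (m + 1))) • a, 0⟩ := by
  induction k with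
  | zero => ext : 1 <;> simp
  | succ k ih =>
    rw [pow_succ, ih]
    ext : 1 <;> simp [act_zero, add_smul]

theorem mk_one_pow (a : Vec p m) (k : ℕ) :
    (⟨a, 1⟩ : SdProd p m) ^ k =
      ⟨(∑ j ∈ Finset.range k, (1 + p : ZMod (p ^ (m + 1))) ^ j) • a, k⟩ := by
  induction k with
  | zero => ext : 1 <;> simp
  | succ k ih =>
    rw [pow_succ, ih]
    ext : 1 <;> simp [act_natCast, Finset.sum_range_succ, add_smul]

theorem gen_pow (k : ℕ) : (gen : SdProd p m) ^ k = ⟨0, k⟩ := by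
  simpa [gen] using mk_one_pow (p := p) (m := m) 0 k

theorem eq_mk_zero_mul_gen_pow (g : SdProd p m) : g = ⟨g.a, 0⟩ * gen ^ g.i.val := by
  ext : 1 <;> simp [gen_pow, act_zero]

theorem conj_mk_zero (g : SdProd p m) (a : Vec p m) :
    g * ⟨a, 0⟩ * g⁻¹ = ⟨act g.i • a, 0⟩ := by
  ext : 1 <;> simp [← mul_smul, ← act_add, act_zero]

theorem commutator_eq (g h : SdProd p m) :
    ⁅g, h⁆ = ⟨(1 - act h.i) • g.a + (act g.i - 1) • h.a, 0⟩ := by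
  ext : 1
  · simp [commutatorElement_def, ← mul_smul, ← act_add, act_zero, sub_smul]
    abel
  · simp [commutatorElement_def]

end Group

section LowerCentralSeries

variable {p m : ℕ} [NeZero p]

def subA (K : AddSubgroup (Vec p m)) : Subgroup (SdProd p m) where
  carrier := {g | g.i = 0 ∧ g.a ∈ K}
  mul_mem' := by
    rintro g h ⟨hg, hgK⟩ ⟨hh, hhK⟩
    exact ⟨by simp [hg, hh], by simpa [hg, act_zero] using K.add_mem hgK hhK⟩
  one_mem' := ⟨rfl, K.zero_mem⟩
  inv_mem' := by
    rintro g ⟨hg, hgK⟩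
    exact ⟨by simp [hg], by simpa [hg, act_zero] using hgK⟩

theorem commutator_mem_subA_one (g h : SdProd p m) :
    ⁅g, h⁆ ∈ subA ((p : ZMod (p ^ (m + 1))) • ⊤) := by
  obtain ⟨c, hc⟩ := dvd_act_sub_one h.i
  obtain ⟨d, hd⟩ := dvd_act_sub_one g.i
  refine ⟨by simp [commutator_eq], mem_smul_top_iff.2 ⟨-c • g.a + d • h.a, ?_⟩⟩
  rw [commutator_eq, ← neg_sub, hc, hd]
  module

theorem commutator_mem_subA_succ {k : ℕ} {g : SdProd p m}
    (hg : g ∈ subA ((p : ZMod (p ^ (m + 1))) ^ k • ⊤)) (h : SdProd p m) :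
    ⁅g, h⁆ ∈ subA ((p : ZMod (p ^ (m + 1))) ^ (k + 1) • ⊤) := by
  obtain ⟨hgi, hx⟩ := hg
  obtain ⟨x, hx⟩ := mem_smul_top_iff.1 hx
  obtain ⟨c, hc⟩ := dvd_act_sub_one h.i
  refine ⟨by simp [commutator_eq], mem_smul_top_iff.2 ⟨-c • x, ?_⟩⟩
  rw [commutator_eq, hgi, act_zero, ← neg_sub, hc, hx]
  module

theorem lowerCentralSeries_succ_le (k : ℕ) :
    (⊤ : Subgroup (SdProd p m)).lowerCentralSeries (k + 1) ≤
      subA ((p : ZMod (p ^ (m + 1))) ^ (k + 1) • ⊤) := by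
  induction k with
  | zero =>
    rw [zero_add, pow_one, Subgroup.lowerCentralSeries_succ, Subgroup.commutator_le]
    exact fun g _ h _ => commutator_mem_subA_one g h
  | succ k ih =>
    rw [Subgroup.lowerCentralSeries_succ, Subgroup.commutator_le]
    exact fun g hg h _ => commutator_mem_subA_succ (ih hg) h

theorem subA_le_lowerCentralSeries (k : ℕ) :
    subA ((p : ZMod (p ^ (m + 1))) ^ k • ⊤) ≤ (⊤ : Subgroup (SdProd p m)).lowerCentralSeries k := by
  induction k with
  | zero => exact le_top
  | succ k ih =>
    rintro g ⟨hgi, hx⟩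
    obtain ⟨x, hx⟩ := mem_smul_top_iff.1 hx
    have hg : g = ⁅(⟨(p : ZMod (p ^ (m + 1))) ^ k • -x, 0⟩ : SdProd p m), gen⁆ := by
      ext : 1
      · rw [commutator_eq, hx]
        simp only [gen, act_one, act_zero, sub_self, zero_smul, add_zero]
        module
      · simp [hgi, commutator_eq]
    rw [hg, Subgroup.lowerCentralSeries_succ]
    exact Subgroup.commutator_mem_commutator (ih ⟨rfl, mem_smul_top_iff.2 ⟨-x, rfl⟩⟩) trivial

theorem lowerCentralSeries_eq_bot :
    (⊤ : Subgroup (SdProd p m)).lowerCentralSeries (m + 1) = ⊥ := by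
  refine eq_bot_iff.2 fun g hg => ?_
  obtain ⟨hgi, hx⟩ := lowerCentralSeries_succ_le m hg
  obtain ⟨x, hx⟩ := mem_smul_top_iff.1 hx
  rw [← Nat.cast_pow, ZMod.natCast_self, zero_smul] at hx
  exact SdProd.ext hx hgi

theorem lowerCentralSeries_ne_bot (hp : 1 < p) :
    (⊤ : Subgroup (SdProd p m)).lowerCentralSeries m ≠ ⊥ := by
  intro h
  have hmem : (⟨(p : ZMod (p ^ (m + 1))) ^ m • (1, 0), 0⟩ : SdProd p m) ∈ _ :=
    subA_le_lowerCentralSeries m ⟨rfl, mem_smul_top_iff.2 ⟨(1, 0), rfl⟩⟩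
  rw [h, Subgroup.mem_bot] at hmem
  have h0 : ((p ^ m : ℕ) : ZMod (p ^ (m + 1))) = 0 := by
    simpa using congrArg (fun g : SdProd p m => g.a.1) hmem
  rw [ZMod.natCast_eq_zero_iff, Nat.pow_dvd_pow_iff_le_right hp] at h0
  omega

end LowerCentralSeries

section Automorphisms

variable {p m : ℕ} [hp : Fact p.Prime]

def iHom (φ : SdProd p m ≃* SdProd p m) : Vec p m →+ ZMod (p ^ m) where
  toFun a := (φ ⟨a, 0⟩).i
  map_zero' := congrArg SdProd.i (map_one φ)
  map_add' a b := by rw [← mul_i, ← map_mul, mk_zero_mul]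

theorem card_range_le {M : Type*} [AddGroup M] (f : M →+ ZMod (p ^ m)) {v : ℕ} (hv : v ≤ m)
    (h : ∀ x, p ^ v ∣ (f x).val) : Nat.card f.range ≤ p ^ (m - v) := by
  have key : ∀ y ∈ f.range, p ^ (m - v) • y = 0 := by
    rintro _ ⟨x, rfl⟩
    obtain ⟨c, hc⟩ := h x
    rw [nsmul_eq_mul, ← ZMod.natCast_zmod_val (f x), hc, ← Nat.cast_mul, ZMod.natCast_eq_zero_iff,
      ← mul_assoc, ← pow_add, Nat.sub_add_cancel hv]
    exact dvd_mul_right _ _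
  calc Nat.card f.range ≤ Nat.card {y : ZMod (p ^ m) // p ^ (m - v) • y = 0} :=
        Nat.card_le_card_of_injective _ (Subtype.impEmbedding _ _ key).injective
    _ ≤ p ^ (m - v) := card_nsmul_eq_zero_le (pow_pos hp.out.pos _)

theorem card_ker_iHom_le (hodd : Odd p) (φ : SdProd p m ≃* SdProd p m) {x₀ : Vec p m}
    (hx₀ : (φ ⟨x₀, 0⟩).i ≠ 0) :
    Nat.card (iHom φ).ker ≤
      p ^ (padicValNat p (φ ⟨x₀, 0⟩).i.val + 1) * p ^ (padicValNat p (φ ⟨x₀, 0⟩).i.val + 1) := by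
  set v := padicValNat p (φ ⟨x₀, 0⟩).i.val
  obtain ⟨w, hw, hact⟩ := act_sub_one_eq hodd hx₀
  have key : ∀ x : (iHom φ).ker, p ^ (v + 1) • (φ ⟨x, 0⟩).a = 0 := by
    rintro ⟨x, hx⟩
    have hφx : φ ⟨x, 0⟩ = ⟨(φ ⟨x, 0⟩).a, 0⟩ := SdProd.ext rfl hx
    have hcomm : Commute (φ ⟨x, 0⟩) (φ ⟨x₀, 0⟩) :=
      ((mk_zero_commute_iff x _).2 (by rw [act_zero, one_smul])).map φ
    rw [hφx, mk_zero_commute_iff] at hcomm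
    have hker : (act (φ ⟨x₀, 0⟩).i - 1) • (φ ⟨x, 0⟩).a = 0 := by
      rw [sub_smul, one_smul, hcomm, sub_self]
    rw [hact, mul_comm, mul_smul, hw.smul_eq_zero] at hker
    rwa [← Nat.cast_smul_eq_nsmul (ZMod (p ^ (m + 1))), Nat.cast_pow]
  have hinj : Function.Injective fun x : (iHom φ).ker =>
      (⟨(φ ⟨x, 0⟩).a, key x⟩ : {c : Vec p m // p ^ (v + 1) • c = 0}) := by
    rintro ⟨x, hx⟩ ⟨y, hy⟩ hxy
    have := φ.injective (SdProd.ext (congrArg Subtype.val hxy) (hx.trans hy.symm))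
    exact Subtype.ext (congrArg SdProd.a this)
  exact (Nat.card_le_card_of_injective _ hinj).trans
    (card_prod_nsmul_eq_zero_le (pow_pos hp.out.pos _))

/-- An element `⟨x, j⟩` with `v_p(j)` minimal commutes in `A` only with `p^(v+1)`-torsion, while
the `i`-parts of `φ(A)` lie in `p^v ℤ/p^m`; so `|φ(A)| ≤ p^(2v+2) p^(m-v) < |A|`. -/
theorem map_mk_zero_i (hodd : Odd p) (φ : SdProd p m ≃* SdProd p m) (a : Vec p m) :
    (φ ⟨a, 0⟩).i = 0 := by
  by_contra ha
  obtain ⟨x₀, hx₀, hmin⟩ := Set.exists_min_image {x | (φ ⟨x, 0⟩).i ≠ 0}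
    (fun x => padicValNat p (φ ⟨x, 0⟩).i.val) (Set.toFinite _) ⟨a, ha⟩
  set v := padicValNat p (φ ⟨x₀, 0⟩).i.val
  have hdvd : ∀ x, p ^ v ∣ (iHom φ x).val := fun x => by
    by_cases hx : (φ ⟨x, 0⟩).i = 0
    · simp [iHom, hx]
    · exact (pow_dvd_pow p (hmin x hx)).trans pow_padicValNat_dvd
  have hv : v < m := by
    have : p ^ v ≤ (φ ⟨x₀, 0⟩).i.val :=
      Nat.le_of_dvd (Nat.pos_of_ne_zero ((ZMod.val_ne_zero _).2 hx₀)) pow_padicValNat_dvd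
    exact (Nat.pow_lt_pow_iff_right hp.out.one_lt).1 (this.trans_lt (ZMod.val_lt _))
  have hcard := AddSubgroup.card_mul_index (iHom φ).ker
  rw [AddSubgroup.index_ker, Nat.card_prod, Nat.card_zmod] at hcard
  have hle := hcard ▸ Nat.mul_le_mul (card_ker_iHom_le hodd φ hx₀) (card_range_le _ hv.le hdvd)
  rw [← pow_add, ← pow_add, ← pow_add, Nat.pow_le_pow_iff_right hp.out.one_lt] at hle
  omega

theorem map_gen_i (hodd : Odd p) (φ : SdProd p m ≃* SdProd p m) : (φ gen).i = 1 := by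
  set x := φ.symm ⟨(1, 0), 0⟩
  have hx : x = ⟨x.a, 0⟩ := SdProd.ext rfl (map_mk_zero_i hodd φ.symm (1, 0))
  have hrel : gen * x * gen⁻¹ = x ^ (1 + p) := by
    rw [hx, conj_mk_zero, mk_zero_pow]
    simp [gen, act_one]
  have hφ := congrArg φ hrel
  rw [map_mul, map_mul, map_inv, map_pow, MulEquiv.apply_symm_apply, conj_mk_zero,
    mk_zero_pow] at hφ
  have h1 : act (φ gen).i = act 1 := by
    simpa [act_one] using congrArg (fun g : SdProd p m => g.a.1) hφ
  exact act_injective hodd h1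

theorem exists_eq_smul_of_pow_smul_eq_zero {a : Vec p m}
    (h : (p : ZMod (p ^ (m + 1))) ^ m • a = 0) : ∃ b, a = (p : ZMod (p ^ (m + 1))) • b := by
  obtain ⟨b₁, h₁⟩ := exists_eq_mul_of_pow_mul_eq_zero (congrArg Prod.fst h)
  obtain ⟨b₂, h₂⟩ := exists_eq_mul_of_pow_mul_eq_zero (congrArg Prod.snd h)
  exact ⟨(b₁, b₂), Prod.ext h₁ h₂⟩

theorem exists_map_gen_eq (hodd : Odd p) (φ : SdProd p m ≃* SdProd p m) :
    ∃ b : Vec p m, φ gen = ⟨b, 0⟩ * gen * ⟨b, 0⟩⁻¹ := by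
  have hφ : φ gen = ⟨(φ gen).a, 1⟩ := SdProd.ext rfl (map_gen_i hodd φ)
  have hpow : φ gen ^ p ^ m = 1 := by
    rw [← map_pow, gen_pow, ZMod.natCast_self]
    exact map_one φ
  rw [hφ, mk_one_pow] at hpow
  obtain ⟨w, hw, hsum⟩ := exists_isUnit_geom_sum_eq (m := m) hodd
  have h0 : (p : ZMod (p ^ (m + 1))) ^ m • (φ gen).a = 0 := by
    rw [← hw.smul_eq_zero, ← mul_smul, mul_comm, ← hsum]
    exact congrArg SdProd.a hpow
  obtain ⟨b, hb⟩ := exists_eq_smul_of_pow_smul_eq_zero h0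
  refine ⟨-b, ?_⟩
  rw [hφ, hb]
  ext : 1
  · simp [gen, act_one, act_zero]
    module
  · simp [gen]

theorem map_mk {φ : SdProd p m ≃* SdProd p m} (hA : ∀ a, (φ ⟨a, 0⟩).i = 0) {b : Vec p m}
    (hgen : φ gen = ⟨b, 0⟩ * gen * ⟨b, 0⟩⁻¹) (a : Vec p m) (i : ZMod (p ^ m)) :
    φ ⟨a, i⟩ = ⟨(φ ⟨a, 0⟩).a + (1 - act i) • b, i⟩ := by
  have ha : φ ⟨a, 0⟩ = ⟨(φ ⟨a, 0⟩).a, 0⟩ := SdProd.ext rfl (hA a)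
  conv_lhs => rw [eq_mk_zero_mul_gen_pow ⟨a, i⟩, map_mul, map_pow, hgen, conj_pow, gen_pow, ha]
  ext : 1
  · simp [act_zero, ← mul_smul, sub_smul]
    abel
  · simp

theorem map_mk_zero_smul {φ : SdProd p m ≃* SdProd p m} (hA : ∀ a, (φ ⟨a, 0⟩).i = 0)
    (r : ZMod (p ^ (m + 1))) (a : Vec p m) : (φ ⟨r • a, 0⟩).a = r • (φ ⟨a, 0⟩).a := by
  have ha : φ ⟨a, 0⟩ = ⟨(φ ⟨a, 0⟩).a, 0⟩ := SdProd.ext rfl (hA a)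
  rw [← ZMod.natCast_zmod_val r, ← mk_zero_pow, map_pow, ha, mk_zero_pow]

theorem inv_mul_map_eq {φ : SdProd p m ≃* SdProd p m} (hA : ∀ a, (φ ⟨a, 0⟩).i = 0) {b : Vec p m}
    (hgen : φ gen = ⟨b, 0⟩ * gen * ⟨b, 0⟩⁻¹) (x : SdProd p m) :
    x⁻¹ * φ x =
      ⟨(φ ⟨act (-x.i) • x.a, 0⟩).a - act (-x.i) • x.a + (act (-x.i) - 1) • b, 0⟩ := by
  rw [map_mk hA hgen x.a x.i, map_mk_zero_smul hA]
  ext : 1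
  · simp [← mul_smul, act_neg_mul_act, sub_smul, smul_sub]
    abel
  · simp

theorem twistedClassesAreSubgroups (hodd : Odd p) : TwistedClassesAreSubgroups (SdProd p m) := by
  intro φ
  have hA := map_mk_zero_i hodd φ
  obtain ⟨b, hgen⟩ := exists_map_gen_eq hodd φ
  let β : Vec p m →+ Vec p m := AddMonoidHom.mk' (fun a => (φ ⟨a, 0⟩).a) fun a a' => by
    rw [← mk_zero_mul, map_mul, mul_a, hA, act_zero, one_smul]
  let Ψ : Vec p m × ZMod (p ^ (m + 1)) →+ Vec p m := (β - AddMonoidHom.id _).coprod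
    (AddMonoidHom.mk' (fun r => ((p : ZMod (p ^ (m + 1))) * r) • b) fun r s => by
      rw [mul_add, add_smul])
  have hΨ : ∀ a r, Ψ (a, r) = (φ ⟨a, 0⟩).a - a + ((p : ZMod (p ^ (m + 1))) * r) • b :=
    fun _ _ => rfl
  refine ⟨subA Ψ.range, Set.ext fun g => ⟨?_, ?_⟩⟩
  · rintro ⟨hgi, ⟨a, r⟩, hg⟩
    obtain ⟨j, hj⟩ := exists_act_eq hodd r
    refine ⟨⟨act (-j) • a, -j⟩, ?_⟩
    rw [inv_mul_map_eq hA hgen, neg_neg, ← mul_smul, mul_comm, act_neg_mul_act, one_smul, hj,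
      add_sub_cancel_left]
    exact SdProd.ext (hg.symm.trans (hΨ a r)) hgi
  · rintro ⟨x, rfl⟩
    obtain ⟨c, hc⟩ := dvd_act_sub_one (-x.i)
    refine ⟨by rw [inv_mul_map_eq hA hgen], (act (-x.i) • x.a, c), ?_⟩
    rw [inv_mul_map_eq hA hgen, hΨ, hc]

end Automorphisms

end SdProd

end TwistedPGroup

/-- (Theorem A)  For every `n ≥ 1` and every odd prime `p` there exists a finite `p`-group
`G`, nilpotent of class exactly `n`, such that `[G,φ]` is a subgroup for every
automorphism `φ` of `G`. -/
theorem theoremA (n p : ℕ) (hn : 1 ≤ n) (hp : p.Prime) (hodd : Odd p) :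
    ∃ (G : Type) (_ : Group G), IsGoodPGroup p n G := by
  obtain ⟨m, rfl⟩ : ∃ m, n = m + 1 := ⟨n - 1, by omega⟩
  have := Fact.mk hp
  refine ⟨TwistedPGroup.SdProd p m, inferInstance, inferInstance, TwistedPGroup.SdProd.isPGroup,
    TwistedPGroup.SdProd.lowerCentralSeries_eq_bot, ?_,
    TwistedPGroup.SdProd.twistedClassesAreSubgroups hodd⟩
  simpa using TwistedPGroup.SdProd.lowerCentralSeries_ne_bot hp.one_lt
end

section
/- There exists an infinite non-nilpotent group G such that for every automorphism φ of G, the set {g⁻¹ φ(g) | g ∈ G} is a subgroup of G. -/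
/-!
Take `G = ℤ(p^∞) ⋊ ℤ` for an odd prime `p`, with the generator `t` of `ℤ` acting on the Prüfer
group `ℤ(p^∞) = ℚ_p / ℤ_p` by multiplication with `u = 1 + p`. Commutators with `t` multiply by
`p`, so the lower central series never terminates.

An automorphism `φ` preserves the torsion subgroup `ℤ(p^∞)` and acts there by an additive map `α`,
which is automatically `ℤ_p`-linear. Comparing `φ (t a t⁻¹)` with `α (u a)` excludes
`φ t ∈ ℤ(p^∞) t⁻¹`, and divisibility of `ℤ(p^∞)` then makes `φ t` a conjugate `c⁻¹ t c`. Hence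
`g⁻¹ φ(g)` runs exactly over `range (α - 1) + {c - u^k c | k ∈ ℤ}`, and the second set is the
cyclic group generated by `p c`: modulo `p^(N+1)` the powers of `1 + p` are all units `≡ 1 mod p`.
-/

noncomputable section

open PadicInt (toZModPow)

lemma ZMod.zpowers_eq_ker_unitsMap {p : ℕ} (hp : p.Prime) (hp2 : p ≠ 2) (n : ℕ)
    (v : (ZMod (p ^ (n + 1)))ˣ) (hv : (v : ZMod (p ^ (n + 1))) = 1 + p) :
    Subgroup.zpowers v = (ZMod.unitsMap (dvd_pow_self p n.succ_ne_zero)).ker := by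
  have := Fact.mk hp
  set f := ZMod.unitsMap (dvd_pow_self p n.succ_ne_zero)
  have hvf : v ∈ f.ker := by
    rw [MonoidHom.mem_ker, Units.ext_iff, ZMod.unitsMap_val, hv]
    simp
  have hcard : Nat.card f.ker * (p - 1) = p ^ n * (p - 1) := by
    rw [← Nat.totient_prime_pow_succ hp, ← ZMod.card_units p, ← ZMod.card_units_eq_totient,
      ← Nat.card_eq_fintype_card, ← Nat.card_eq_fintype_card, ← f.ker.card_mul_index,
      Subgroup.index_ker, MonoidHom.range_eq_top_of_surjective f (ZMod.unitsMap_surjective _),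
      Subgroup.card_top]
  refine Subgroup.eq_of_le_of_card_ge (Subgroup.zpowers_le.2 hvf) ?_
  rw [Nat.card_zpowers, ← orderOf_units, hv, orderOf_one_add_prime hp hp2,
    Nat.eq_of_mul_eq_mul_right (Nat.sub_pos_of_lt hp.one_lt) hcard]

def PadicInt.oneAddP (p : ℕ) [Fact p.Prime] : ℤ_[p]ˣ :=
  (IsLocalRing.isUnit_one_sub_self_of_mem_nonunits (-(p : ℤ_[p])) (PadicInt.mem_nonunits.2 (by
    rw [norm_neg, PadicInt.norm_p]
    exact inv_lt_one_of_one_lt₀ (by exact_mod_cast (Fact.out : p.Prime).one_lt)))).unit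

@[simp] lemma PadicInt.coe_oneAddP (p : ℕ) [Fact p.Prime] :
    (PadicInt.oneAddP p : ℤ_[p]) = 1 + p := by
  simp [PadicInt.oneAddP]

open PadicInt (oneAddP)

abbrev Prufer (p : ℕ) [Fact p.Prime] : Type :=
  ℚ_[p] ⧸ LinearMap.range (Algebra.linearMap ℤ_[p] ℚ_[p])

namespace Prufer

variable {p : ℕ} [Fact p.Prime]

lemma mk_eq_zero_iff {x : ℚ_[p]} : (Submodule.Quotient.mk x : Prufer p) = 0 ↔ ‖x‖ ≤ 1 := by
  rw [Submodule.Quotient.mk_eq_zero, LinearMap.mem_range]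
  exact ⟨fun ⟨y, hy⟩ => hy ▸ y.norm_le_one, fun h => ⟨⟨x, h⟩, rfl⟩⟩

lemma pow_smul_mk (N : ℕ) (x : ℚ_[p]) :
    (p : ℤ_[p]) ^ N • (Submodule.Quotient.mk x : Prufer p) =
      Submodule.Quotient.mk ((p : ℚ_[p]) ^ N * x) := by
  rw [← Submodule.Quotient.mk_smul, Algebra.smul_def, map_pow, map_natCast]

lemma exists_pow_smul_eq_zero (a : Prufer p) : ∃ N : ℕ, (p : ℤ_[p]) ^ N • a = 0 := by
  obtain ⟨x, rfl⟩ := Submodule.Quotient.mk_surjective _ a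
  have hp : (1 : ℝ) < p := by exact_mod_cast (Fact.out : p.Prime).one_lt
  obtain ⟨N, hN⟩ := pow_unbounded_of_one_lt ‖x‖ hp
  refine ⟨N, ?_⟩
  rw [pow_smul_mk, mk_eq_zero_iff, norm_mul, Padic.norm_p_pow, zpow_neg, zpow_natCast,
    inv_mul_le_iff₀ (by positivity), mul_one]
  exact hN.le

lemma exists_pow_smul_ne_zero (n : ℕ) : ∃ a : Prufer p, (p : ℤ_[p]) ^ n • a ≠ 0 := by
  have hp : (1 : ℝ) < p := by exact_mod_cast (Fact.out : p.Prime).one_lt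
  have hp0 : (p : ℚ_[p]) ≠ 0 := by simp [(Fact.out : p.Prime).ne_zero]
  refine ⟨Submodule.Quotient.mk ((p : ℚ_[p]) ^ (n + 1))⁻¹, ?_⟩
  rw [pow_smul_mk, ne_eq, mk_eq_zero_iff,
    show (p : ℚ_[p]) ^ n * ((p : ℚ_[p]) ^ (n + 1))⁻¹ = (p : ℚ_[p])⁻¹ by rw [pow_succ]; field_simp,
    norm_inv, Padic.norm_p, inv_inv]
  exact hp.not_ge

lemma exists_smul_eq (b : Prufer p) : ∃ a : Prufer p, (p : ℤ_[p]) • a = b := by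
  obtain ⟨x, rfl⟩ := Submodule.Quotient.mk_surjective _ b
  refine ⟨Submodule.Quotient.mk ((p : ℚ_[p])⁻¹ * x), ?_⟩
  rw [← Submodule.Quotient.mk_smul, Algebra.smul_def, map_natCast, ← mul_assoc,
    mul_inv_cancel₀ (by simp [(Fact.out : p.Prime).ne_zero]), one_mul]

lemma smul_eq_smul_of_toZModPow_eq {N : ℕ} {a : Prufer p} (ha : (p : ℤ_[p]) ^ N • a = 0)
    {x y : ℤ_[p]} (hxy : toZModPow N x = toZModPow N y) : x • a = y • a := by
  have : x - y ∈ Ideal.span {(p : ℤ_[p]) ^ N} := by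
    rw [← PadicInt.ker_toZModPow, RingHom.mem_ker, map_sub, hxy, sub_self]
  obtain ⟨z, hz⟩ := Ideal.mem_span_singleton'.1 this
  rw [← sub_eq_zero, ← sub_smul, ← hz, mul_smul, ha, smul_zero]

lemma smul_eq_val_smul {N : ℕ} {a : Prufer p} (ha : (p : ℤ_[p]) ^ N • a = 0) (x : ℤ_[p]) :
    x • a = (toZModPow N x).val • a := by
  rw [← Nat.cast_smul_eq_nsmul ℤ_[p]]
  exact smul_eq_smul_of_toZModPow_eq ha (by rw [map_natCast, ZMod.natCast_zmod_val])

lemma _root_.AddMonoidHom.map_padicInt_smul (f : Prufer p →+ Prufer p) (x : ℤ_[p])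
    (a : Prufer p) : f (x • a) = x • f a := by
  obtain ⟨N, ha⟩ := exists_pow_smul_eq_zero a
  have hfa : (p : ℤ_[p]) ^ N • f a = 0 := by
    rw [← Nat.cast_pow, Nat.cast_smul_eq_nsmul, ← map_nsmul, ← Nat.cast_smul_eq_nsmul ℤ_[p],
      Nat.cast_pow, ha, map_zero]
  rw [smul_eq_val_smul ha, smul_eq_val_smul hfa, map_nsmul]

lemma exists_oneAddP_smul_ne_inv_smul (hp2 : p ≠ 2) :
    ∃ a : Prufer p, oneAddP p • a ≠ (oneAddP p)⁻¹ • a := by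
  have hp : p.Prime := Fact.out
  have hunit : IsUnit ((p : ℤ_[p]) + 2) := by
    by_contra h
    rw [PadicInt.not_isUnit_iff, show (p : ℤ_[p]) + 2 = ((p + 2 : ℤ) : ℤ_[p]) by push_cast; rfl,
      PadicInt.norm_int_lt_one_iff_dvd, Int.dvd_add_right (dvd_refl _)] at h
    exact hp2 ((Nat.prime_dvd_prime_iff_eq hp Nat.prime_two).1 (by exact_mod_cast h))
  obtain ⟨a, ha⟩ := exists_pow_smul_ne_zero (p := p) 1
  refine ⟨a, fun h => ha ?_⟩
  have h2 : ((oneAddP p ^ 2 : ℤ_[p]ˣ) : ℤ_[p]) • a = a := by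
    rw [← Units.smul_def, pow_two, mul_smul, h, smul_inv_smul]
  have h3 : ((p : ℤ_[p]) + 2) • (p : ℤ_[p]) • a = 0 := by
    rw [smul_smul, show ((p : ℤ_[p]) + 2) * p = ((oneAddP p ^ 2 : ℤ_[p]ˣ) : ℤ_[p]) - 1 by
      simp; ring, sub_smul, h2, one_smul, sub_self]
  rwa [pow_one, ← hunit.smul_eq_zero]

lemma sub_zpow_oneAddP_smul_mem (c : Prufer p) (k : ℤ) :
    c - oneAddP p ^ k • c ∈ AddSubgroup.zmultiples ((p : ℤ_[p]) • c) := by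
  set f := (PadicInt.toZMod : ℤ_[p] →+* ZMod p).toMonoidHom
  have hu : Units.map f (oneAddP p) = 1 := by ext; simp [f]
  have hk : (1 : ℤ_[p]) - (oneAddP p ^ k : ℤ_[p]ˣ) ∈ Ideal.span {(p : ℤ_[p])} := by
    rw [← PadicInt.maximalIdeal_eq_span_p, ← PadicInt.ker_toZMod, RingHom.mem_ker, map_sub,
      map_one, sub_eq_zero, eq_comm]
    exact congrArg Units.val (show Units.map f (oneAddP p ^ k) = 1 by rw [map_zpow, hu, one_zpow])
  obtain ⟨z, hz⟩ := Ideal.mem_span_singleton'.1 hk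
  obtain ⟨N, hN⟩ := exists_pow_smul_eq_zero ((p : ℤ_[p]) • c)
  refine ⟨(toZModPow N z).val, ?_⟩
  dsimp only
  rw [natCast_zsmul, ← smul_eq_val_smul hN, ← mul_smul, hz, Units.smul_def, sub_smul, one_smul]

lemma exists_sub_zpow_oneAddP_smul_eq (hp2 : p ≠ 2) (c : Prufer p) (m : ℤ) :
    ∃ k : ℤ, c - oneAddP p ^ k • c = m • (p : ℤ_[p]) • c := by
  obtain ⟨N, hN⟩ := exists_pow_smul_eq_zero c
  have hN' : (p : ℤ_[p]) ^ (N + 1) • c = 0 := by rw [pow_succ', mul_smul, hN, smul_zero]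
  set f := (toZModPow (N + 1) : ℤ_[p] →+* ZMod (p ^ (N + 1))).toMonoidHom
  have hv : (Units.map f (oneAddP p) : ZMod (p ^ (N + 1))) = 1 + p := by simp [f]
  have hnil : IsNilpotent ((p : ZMod (p ^ (N + 1))) * m) :=
    ⟨N + 1, by rw [mul_pow, ← Nat.cast_pow, ZMod.natCast_self, zero_mul]⟩
  have hy : hnil.isUnit_one_sub.unit ∈ Subgroup.zpowers (Units.map f (oneAddP p)) := by
    rw [ZMod.zpowers_eq_ker_unitsMap (Fact.out : p.Prime) hp2 N _ hv, MonoidHom.mem_ker,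
      Units.ext_iff, ZMod.unitsMap_val]
    simp
  obtain ⟨k, hk : Units.map f (oneAddP p) ^ k = _⟩ := hy
  have hk' : toZModPow (N + 1) ((oneAddP p ^ k : ℤ_[p]ˣ) : ℤ_[p]) = 1 - p * m := by
    rw [← IsUnit.unit_spec hnil.isUnit_one_sub, ← hk, ← map_zpow]
    rfl
  refine ⟨k, ?_⟩
  calc c - oneAddP p ^ k • c = (1 - (oneAddP p ^ k : ℤ_[p]ˣ) : ℤ_[p]) • c := by
        rw [sub_smul, one_smul, Units.smul_def]
    _ = ((p : ℤ_[p]) * m) • c := smul_eq_smul_of_toZModPow_eq hN' (by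
        simp only [map_sub, map_one, map_mul, map_natCast, map_intCast, hk', sub_sub_cancel])
    _ = m • (p : ℤ_[p]) • c := by rw [mul_comm, mul_smul, Int.cast_smul_eq_zsmul]

end Prufer

@[ext] structure PruferByInt (p : ℕ) [Fact p.Prime] where
  left : Prufer p
  right : ℤ

namespace PruferByInt

variable {p : ℕ} [Fact p.Prime]

instance : Mul (PruferByInt p) :=
  ⟨fun g h => ⟨g.left + oneAddP p ^ g.right • h.left, g.right + h.right⟩⟩

instance : One (PruferByInt p) := ⟨⟨0, 0⟩⟩

instance : Inv (PruferByInt p) := ⟨fun g => ⟨-(oneAddP p ^ (-g.right) • g.left), -g.right⟩⟩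

@[simp] lemma mul_left (g h : PruferByInt p) :
    (g * h).left = g.left + oneAddP p ^ g.right • h.left := rfl
@[simp] lemma mul_right (g h : PruferByInt p) : (g * h).right = g.right + h.right := rfl
@[simp] lemma one_left : (1 : PruferByInt p).left = 0 := rfl
@[simp] lemma one_right : (1 : PruferByInt p).right = 0 := rfl
@[simp] lemma inv_left (g : PruferByInt p) : g⁻¹.left = -(oneAddP p ^ (-g.right) • g.left) := rfl
@[simp] lemma inv_right (g : PruferByInt p) : g⁻¹.right = -g.right := rfl

instance : Group (PruferByInt p) :=
  Group.ofLeftAxioms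
    (fun g h k => by ext <;> simp [smul_add, mul_smul, zpow_add, add_assoc])
    (fun g => by ext <;> simp)
    (fun g => by ext <;> simp)

instance : Infinite (PruferByInt p) :=
  Infinite.of_injective (fun k : ℤ => (⟨0, k⟩ : PruferByInt p)) fun _ _ h => congrArg right h

def rightHom : PruferByInt p →* Multiplicative ℤ where
  toFun g := .ofAdd g.right
  map_one' := rfl
  map_mul' _ _ := rfl

lemma zpow_right (g : PruferByInt p) (k : ℤ) : (g ^ k).right = k * g.right := by
  change (rightHom (g ^ k)).toAdd = _
  rw [map_zpow, toAdd_zpow, smul_eq_mul]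
  rfl

def of (a : Prufer p) : PruferByInt p := ⟨a, 0⟩

def t : PruferByInt p := ⟨0, 1⟩

@[simp] lemma of_left (a : Prufer p) : (of a).left = a := rfl
@[simp] lemma of_right (a : Prufer p) : (of a).right = 0 := rfl

lemma of_add (a b : Prufer p) : of (a + b) = of a * of b := by ext <;> simp

lemma of_nsmul (n : ℕ) (a : Prufer p) : of (n • a) = of a ^ n := by
  induction n with
  | zero => ext <;> simp
  | succ n ih => rw [succ_nsmul, of_add, ih, pow_succ]

lemma t_zpow (k : ℤ) : (t : PruferByInt p) ^ k = ⟨0, k⟩ := by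
  induction k using Int.induction_on with
  | zero => rfl
  | succ k ih => rw [zpow_add_one, ih]; ext <;> simp [t]
  | pred k ih => rw [zpow_sub_one, ih]; ext <;> simp [t]; ring

lemma of_left_mul_t_zpow_right (g : PruferByInt p) : of g.left * t ^ g.right = g := by
  ext <;> simp [t_zpow]

lemma conj_of (g : PruferByInt p) (a : Prufer p) :
    g * of a * g⁻¹ = of (oneAddP p ^ g.right • a) := by
  ext <;> simp [← mul_smul]

lemma isOfFinOrder_iff_right_eq_zero (g : PruferByInt p) : IsOfFinOrder g ↔ g.right = 0 := by
  refine ⟨fun h => ?_, fun h => ?_⟩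
  · obtain ⟨n, hn, hgn⟩ := isOfFinOrder_iff_pow_eq_one.1 h
    have := congrArg right hgn
    rw [← zpow_natCast, zpow_right] at this
    simpa [hn.ne'] using this
  · obtain ⟨N, hN⟩ := Prufer.exists_pow_smul_eq_zero g.left
    refine isOfFinOrder_iff_pow_eq_one.2 ⟨p ^ N, pow_pos (Fact.out : p.Prime).pos N, ?_⟩
    rw [show g = of g.left by ext <;> simp [h], ← of_nsmul, ← Nat.cast_smul_eq_nsmul ℤ_[p],
      Nat.cast_pow, hN]
    rfl

open scoped commutatorElement in
lemma commutatorElement_t_of (a : Prufer p) :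
    ⁅(t : PruferByInt p), of a⁆ = of ((p : ℤ_[p]) • a) := by
  ext <;> simp [commutatorElement_def, t, Units.smul_def, add_smul]

lemma of_pow_smul_mem_lowerCentralSeries (n : ℕ) (a : Prufer p) :
    of ((p : ℤ_[p]) ^ n • a) ∈ (⊤ : Subgroup (PruferByInt p)).lowerCentralSeries n := by
  induction n with
  | zero => exact Subgroup.mem_top _
  | succ n ih =>
    rw [pow_succ', mul_smul, ← commutatorElement_t_of, Subgroup.lowerCentralSeries_succ,
      Subgroup.commutator_comm]
    exact Subgroup.commutator_mem_commutator (Subgroup.mem_top t) ih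

lemma not_isNilpotent : ¬ Group.IsNilpotent (PruferByInt p) := by
  intro h
  obtain ⟨n, hn⟩ := Subgroup.nilpotent_iff_lowerCentralSeries.1 h
  obtain ⟨a, ha⟩ := Prufer.exists_pow_smul_ne_zero (p := p) n
  have := of_pow_smul_mem_lowerCentralSeries n a
  rw [hn, Subgroup.mem_bot] at this
  exact ha (congrArg left this)

def ofAddSubgroup (S : AddSubgroup (Prufer p)) : Subgroup (PruferByInt p) where
  carrier := of '' S
  mul_mem' := by
    rintro _ _ ⟨a, ha, rfl⟩ ⟨b, hb, rfl⟩
    exact ⟨a + b, S.add_mem ha hb, of_add a b⟩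
  one_mem' := ⟨0, S.zero_mem, rfl⟩
  inv_mem' := by
    rintro _ ⟨a, ha, rfl⟩
    exact ⟨-a, S.neg_mem ha, by ext <;> simp [of]⟩

section Automorphism

variable (φ : PruferByInt p ≃* PruferByInt p)

lemma right_apply_of (a : Prufer p) : (φ (of a)).right = 0 :=
  (isOfFinOrder_iff_right_eq_zero _).1
    (φ.toMonoidHom.isOfFinOrder ((isOfFinOrder_iff_right_eq_zero _).2 rfl))

def restrict : Prufer p →+ Prufer p where
  toFun a := (φ (of a)).left
  map_zero' := by rw [show of (0 : Prufer p) = 1 from rfl, map_one]; rfl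
  map_add' a b := by simp [of_add, right_apply_of]

lemma apply_of (a : Prufer p) : φ (of a) = of (restrict φ a) := by
  ext
  · rfl
  · exact right_apply_of φ a

lemma restrict_injective : Function.Injective (restrict φ) := fun a b h => by
  have : φ (of a) = φ (of b) := by rw [apply_of, apply_of, h]
  exact congrArg left (φ.injective this)

lemma restrict_zpow_smul (k : ℤ) (a : Prufer p) :
    restrict φ (oneAddP p ^ k • a) = oneAddP p ^ k • restrict φ a := by
  rw [Units.smul_def, AddMonoidHom.map_padicInt_smul, ← Units.smul_def]

lemma right_apply (g : PruferByInt p) : (φ g).right = g.right * (φ t).right := by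
  conv_lhs => rw [← of_left_mul_t_zpow_right g, map_mul, map_zpow, mul_right, right_apply_of,
    zpow_right, zero_add]

lemma right_apply_t (hp2 : p ≠ 2) : (φ t).right = 1 := by
  have hε : (φ t).right * (φ.symm t).right = 1 := by
    rw [mul_comm, ← right_apply, φ.apply_symm_apply]; rfl
  refine (Int.eq_one_or_neg_one_of_mul_eq_one hε).resolve_right fun h => ?_
  obtain ⟨a, ha⟩ := Prufer.exists_oneAddP_smul_ne_inv_smul hp2
  refine ha (restrict_injective φ ?_)
  have hconj := congrArg φ (conj_of t a)
  rw [map_mul, map_mul, map_inv, apply_of, apply_of, conj_of, h] at hconj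
  have := congrArg left hconj
  simp only [of_left, t, zpow_one] at this
  rw [← this, ← zpow_neg_one, restrict_zpow_smul]

lemma exists_apply_t_eq (hp2 : p ≠ 2) : ∃ c : Prufer p, φ t = (of c)⁻¹ * t * of c := by
  obtain ⟨c, hc⟩ := Prufer.exists_smul_eq (φ t).left
  refine ⟨c, ?_⟩
  rw [show (of c)⁻¹ * t * of c = ⟨(p : ℤ_[p]) • c, 1⟩ by
    ext <;> simp [of, t, Units.smul_def, add_smul]]
  ext
  · exact hc.symm
  · exact right_apply_t φ hp2

variable {φ} {c : Prufer p}

lemma apply_eq (hc : φ t = (of c)⁻¹ * t * of c) (g : PruferByInt p) :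
    φ g = ⟨restrict φ g.left + (oneAddP p ^ g.right • c - c), g.right⟩ := by
  have ht : φ (t ^ g.right) = (of c)⁻¹ * t ^ g.right * of c := by
    simpa [hc] using conj_zpow (a := (of c)⁻¹) (b := t) (i := g.right)
  conv_lhs => rw [← of_left_mul_t_zpow_right g, map_mul, apply_of, ht]
  ext <;> simp [of, t_zpow]
  abel

lemma inv_mul_apply (hc : φ t = (of c)⁻¹ * t * of c) (g : PruferByInt p) :
    g⁻¹ * φ g = of (oneAddP p ^ (-g.right) • (restrict φ g.left - g.left) +
      (c - oneAddP p ^ (-g.right) • c)) := by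
  ext <;> simp [apply_eq hc, of, smul_add, smul_sub, smul_smul]
  abel

end Automorphism

theorem exists_subgroup_coe_eq_inv_mul_apply (hp2 : p ≠ 2)
    (φ : PruferByInt p ≃* PruferByInt p) :
    ∃ H : Subgroup (PruferByInt p), (H : Set (PruferByInt p)) = {g | ∃ a, g = a⁻¹ * φ a} := by
  obtain ⟨c, hc⟩ := exists_apply_t_eq φ hp2
  refine ⟨ofAddSubgroup ((restrict φ - .id _).range ⊔ .zmultiples ((p : ℤ_[p]) • c)), ?_⟩
  ext g
  constructor
  · rintro ⟨_, hx, rfl⟩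
    obtain ⟨_, ⟨a, rfl⟩, _, hz, rfl⟩ := AddSubgroup.mem_sup.1 hx
    obtain ⟨m, rfl⟩ := AddSubgroup.mem_zmultiples_iff.1 hz
    obtain ⟨k, hk⟩ := Prufer.exists_sub_zpow_oneAddP_smul_eq hp2 c m
    refine ⟨⟨oneAddP p ^ (-k) • a, -k⟩, ?_⟩
    rw [inv_mul_apply hc, neg_neg, hk, restrict_zpow_smul, ← smul_sub, smul_smul, ← zpow_add,
      add_neg_cancel, zpow_zero, one_smul]
    rfl
  · rintro ⟨h, rfl⟩
    rw [inv_mul_apply hc]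
    refine ⟨_, AddSubgroup.add_mem _
      (AddSubgroup.mem_sup_left ⟨oneAddP p ^ (-h.right) • h.left, ?_⟩)
      (AddSubgroup.mem_sup_right (Prufer.sub_zpow_oneAddP_smul_mem c _)), rfl⟩
    simp only [AddMonoidHom.sub_apply, AddMonoidHom.id_apply, restrict_zpow_smul, smul_sub]

end PruferByInt

end

/-- There exists an infinite non-nilpotent group `G` such that for every automorphism `φ`
of `G` the set `{g⁻¹ φ(g) | g ∈ G}` is a subgroup of `G`. -/
theorem exists_infinite_nonnilpotent_with_twisted_subgroups :
    ∃ (G : Type) (_ : Group G), Infinite G ∧ ¬ Group.IsNilpotent G ∧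
      ∀ φ : G ≃* G, ∃ H : Subgroup G, (H : Set G) = {g : G | ∃ a : G, g = a⁻¹ * φ a} :=
  ⟨PruferByInt 3, inferInstance, inferInstance, PruferByInt.not_isNilpotent,
    PruferByInt.exists_subgroup_coe_eq_inv_mul_apply (by norm_num)⟩
end

section
/- Let n > 1 and G = (Z_{2^n} × Z_{2^n}) ⋊ ⟨x⟩ with x of order 2^{n-1} acting on A by c ↦ c³. Then there exists an automorphism φ of G such that [G,φ] = {g⁻¹ φ(g) | g ∈ G} is not a subgroup of G. -/
/-!
Take `c ∈ A` of order `2^n` and `y = x c`. Because `2^(n+1) ∣ 3^(2^(n-1)) - 1`, the element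
`y^(2^(n-1)) = x^(2^(n-1)) c^((3^(2^(n-1)) - 1) / 2)` is trivial, and `y` acts on the abelian
group `A` as `x` does, so `a x^k ↦ a y^k` is an automorphism `φ` of `G`. Then
`(a x^k)⁻¹ φ(a x^k) = x^(-k) y^k`, so `[G,φ]` has at most `2^(n-1)` elements, while it contains
`x⁻¹ y = c` of order `2^n`; hence it is not a subgroup.
-/

open Finset Subgroup

theorem two_pow_succ_dvd_geom_sum_three {m : ℕ} (hm : m ≠ 0) :
    2 ^ (m + 1) ∣ ∑ i ∈ range (2 ^ m), 3 ^ i := by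
  induction m with
  | zero => exact absurd rfl hm
  | succ m ih =>
    rcases Nat.eq_zero_or_pos m with rfl | hm
    · decide
    have hsplit : ∑ i ∈ range (2 ^ (m + 1)), 3 ^ i
        = (∑ i ∈ range (2 ^ m), 3 ^ i) * (3 ^ 2 ^ m + 1) := by
      rw [pow_succ, mul_two, sum_range_add]
      simp only [pow_add, ← mul_sum]
      ring
    have hodd : 2 ∣ 3 ^ 2 ^ m + 1 := (Odd.add_one (Odd.pow (by decide))).two_dvd
    rw [hsplit, pow_succ]
    exact mul_dvd_mul (ih hm.ne') hodd

section

variable {G : Type*} [Group G]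

theorem mul_pow_eq_pow_mul_pow_geom_sum {x c : G} {r : ℕ} (h : x⁻¹ * c * x = c ^ r) (k : ℕ) :
    (x * c) ^ k = x ^ k * c ^ (∑ i ∈ range k, r ^ i) := by
  induction k with
  | zero => simp
  | succ k ih =>
    have hconj : x⁻¹ * c ^ (∑ i ∈ range k, r ^ i) * x = c ^ (r * ∑ i ∈ range k, r ^ i) := by
      rw [pow_mul, ← h]
      simpa using (conj_pow (a := x⁻¹) (b := c)).symm
    rw [pow_succ, ih, geom_sum_succ, pow_add, pow_one, pow_succ, ← hconj]
    group

theorem mul_pow_two_pow_eq_one {x c : G} {m : ℕ} (hm : m ≠ 0) (hx : x ^ 2 ^ m = 1)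
    (hc : c ^ 2 ^ (m + 1) = 1) (h : x⁻¹ * c * x = c ^ 3) : (x * c) ^ 2 ^ m = 1 := by
  obtain ⟨q, hq⟩ := two_pow_succ_dvd_geom_sum_three hm
  rw [mul_pow_eq_pow_mul_pow_geom_sum h, hx, hq, pow_mul, hc, one_pow, one_mul]

theorem exists_mem_centralizer_orderOf_eq {A : Subgroup G} {k : ℕ}
    (f : A ≃* Multiplicative (ZMod k × ZMod k)) :
    ∃ c ∈ A, c ∈ centralizer A ∧ orderOf c = k := by
  have hcomm (u v : A) : u * v = v * u := f.injective (by rw [map_mul, map_mul, mul_comm])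
  refine ⟨f.symm (.ofAdd (1, 0)), SetLike.coe_mem _,
    fun a ha => congrArg Subtype.val (hcomm ⟨a, ha⟩ _), ?_⟩
  rw [Subgroup.orderOf_coe, MulEquiv.orderOf_eq, orderOf_ofAdd_eq_addOrderOf,
    ← AddMonoidHom.inl_apply, addOrderOf_injective _ (fun _ _ h => congrArg Prod.fst h) 1,
    ZMod.addOrderOf_one]

end

namespace Subgroup.IsComplement'

variable {G : Type*} [Group G] {A K : Subgroup G} [A.Normal]

noncomputable def extendHom (h : A.IsComplement' K) (ψ : K →* G)
    (hψ : MulAut.conjNormal.comp ψ = (MulAut.conjNormal (H := A)).comp K.subtype) : G →* G :=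
  (SemidirectProduct.lift A.subtype ψ fun k => by
      ext a
      have := congrArg (fun f => ((f k a : A) : G)) hψ
      simpa [MulAut.conjNormal_apply] using this.symm).comp
    (SemidirectProduct.mulEquivSubgroup h).symm.toMonoidHom

variable (h : A.IsComplement' K) (ψ : K →* G)
    (hψ : MulAut.conjNormal.comp ψ = (MulAut.conjNormal (H := A)).comp K.subtype)

theorem extendHom_mul (a : A) (k : K) : h.extendHom ψ hψ (a * k) = a * ψ k := by
  have : (SemidirectProduct.mulEquivSubgroup h).symm (a * k) = ⟨a, k⟩ :=
    (MulEquiv.symm_apply_eq _).mpr rfl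
  simp [extendHom, this]

theorem extendHom_coe_left (a : A) : h.extendHom ψ hψ a = a := by
  simpa using h.extendHom_mul ψ hψ a 1

theorem extendHom_coe_right (k : K) : h.extendHom ψ hψ k = ψ k := by
  simpa using h.extendHom_mul ψ hψ 1 k

theorem setOf_inv_mul_extendHom :
    {g | ∃ b, g = b⁻¹ * h.extendHom ψ hψ b} = Set.range fun k : K => (k : G)⁻¹ * ψ k := by
  ext g
  constructor
  · rintro ⟨b, rfl⟩
    obtain ⟨⟨a, k⟩, rfl, -⟩ := h.existsUnique b
    refine ⟨k, ?_⟩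
    simp only [h.extendHom_mul]
    group
  · rintro ⟨k, rfl⟩
    exact ⟨k, by rw [h.extendHom_coe_right]⟩

theorem exists_mulEquiv_apply_eq_mul [Finite G] {x c : G} (h : A.IsComplement' (zpowers x))
    (hcA : c ∈ A) (hc : c ∈ centralizer A) (hxc : orderOf (x * c) ∣ orderOf x) :
    ∃ φ : G ≃* G, φ x = x * c ∧ Nat.card {g | ∃ b, g = b⁻¹ * φ b} ≤ orderOf x := by
  have hgen : ∀ k : zpowers x, k ∈ zpowers ⟨x, mem_zpowers x⟩ := by
    rintro ⟨_, m, rfl⟩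
    exact ⟨m, rfl⟩
  set ψ := monoidHomOfForallMemZpowers hgen (g' := x * c) (by rwa [Subgroup.orderOf_mk])
  have hψx : ψ ⟨x, mem_zpowers x⟩ = x * c := monoidHomOfForallMemZpowers_apply_gen ..
  have hψ : MulAut.conjNormal.comp ψ = (MulAut.conjNormal (H := A)).comp (zpowers x).subtype := by
    refine (MonoidHom.eq_iff_eq_on_generator hgen _ _).mpr ?_
    ext a
    simp only [MonoidHom.comp_apply, hψx, MulAut.conjNormal_apply, Subgroup.coe_subtype]
    rw [mul_assoc x, ← hc a a.2]
    group
  set φ := h.extendHom ψ hψ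
  have hφx : φ x = x * c := (h.extendHom_coe_right ψ hψ ⟨x, mem_zpowers x⟩).trans hψx
  have hφ : Function.Surjective φ := by
    rw [← MonoidHom.range_eq_top, eq_top_iff, ← h.sup_eq_top, sup_le_iff]
    refine ⟨fun a ha => ⟨a, h.extendHom_coe_left ψ hψ ⟨a, ha⟩⟩, zpowers_le.mpr ⟨x * c⁻¹, ?_⟩⟩
    rw [map_mul, map_inv, hφx, h.extendHom_coe_left ψ hψ ⟨c, hcA⟩, mul_inv_cancel_right]
  refine ⟨MulEquiv.ofBijective φ ⟨Finite.injective_iff_surjective.mpr hφ, hφ⟩, hφx, ?_⟩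
  calc Nat.card {g | ∃ b, g = b⁻¹ * φ b}
      = Nat.card (Set.range fun k : zpowers x => (k : G)⁻¹ * ψ k) := by
        rw [h.setOf_inv_mul_extendHom]
    _ ≤ orderOf x := (Finite.card_range_le _).trans (Nat.card_zpowers x).le

end Subgroup.IsComplement'

/-- Let `n > 1` and `G = A ⋊ ⟨x⟩` where `A ≅ Z_{2^n} × Z_{2^n}`, `x` has order `2^{n-1}`
and acts on `A` by `c ↦ c³`.  Then there exists an automorphism `φ` of `G` such that
`[G,φ] = {g⁻¹ φ(g) | g ∈ G}` is not a subgroup of `G`. -/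
theorem two_group_has_bad_automorphism (n : ℕ) (hn : 1 < n) (G : Type*) [Group G] [Finite G]
    (A : Subgroup G) (x : G)
    (hAnorm : A.Normal)
    (hcompl : Subgroup.IsComplement' A (Subgroup.zpowers x))
    (hAiso : Nonempty (A ≃* Multiplicative (ZMod (2 ^ n) × ZMod (2 ^ n))))
    (hx : orderOf x = 2 ^ (n - 1))
    (hact : ∀ c ∈ A, x⁻¹ * c * x = c ^ 3) :
    ∃ φ : G ≃* G, ¬ ∃ H : Subgroup G, (H : Set G) = {g : G | ∃ a : G, g = a⁻¹ * φ a} := by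
  obtain ⟨c, hcA, hcent, hc⟩ := exists_mem_centralizer_orderOf_eq hAiso.some
  have hxc : orderOf (x * c) ∣ orderOf x := by
    rw [hx]
    refine orderOf_dvd_of_pow_eq_one (mul_pow_two_pow_eq_one (by omega) ?_ ?_ (hact c hcA))
    · rw [← hx, pow_orderOf_eq_one]
    · rw [Nat.sub_add_cancel hn.le, ← hc, pow_orderOf_eq_one]
  obtain ⟨φ, hφx, hcard⟩ := hcompl.exists_mulEquiv_apply_eq_mul hcA hcent hxc
  refine ⟨φ, fun ⟨H, hH⟩ => ?_⟩
  have hcH : c ∈ H := by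
    rw [← SetLike.mem_coe, hH]
    exact ⟨x, by rw [hφx, inv_mul_cancel_left]⟩
  have hH_card : Nat.card H ≤ 2 ^ (n - 1) :=
    hx ▸ (congrArg (fun s : Set G => Nat.card s) hH).trans_le hcard
  have hc_le : 2 ^ n ≤ Nat.card H := Nat.le_of_dvd Nat.card_pos (hc ▸ H.orderOf_dvd_natCard hcH)
  have := Nat.pow_lt_pow_right (show 1 < 2 by norm_num) (show n - 1 < n by omega)
  omega
end

section
/- Let n > 2 and G = D_{2^n} the dihedral group of order 2^n, with presentation G = ⟨a⟩ ⋊ ⟨x⟩, a of order 2^{n-1}, x of order 2, a^x = a⁻¹. The automorphism φ defined by φ(a) = a, φ(x) = x·a⁻¹ satisfies: [G,φ] = {g⁻¹ φ(g) | g ∈ G} has at most 2 elements, contains a⁻¹ of order 2^{n-1} > 2, and hence is not a subgroup of G. -/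
open DihedralGroup

private def ψ (m : ℕ) : DihedralGroup m ≃* DihedralGroup m where
  toFun g := match g with
    | r i => r i
    | sr i => sr (i - 1)
  invFun g := match g with
    | r i => r i
    | sr i => sr (i + 1)
  left_inv := by rintro (i | i) <;> simp
  right_inv := by rintro (i | i) <;> simp
  map_mul' := by
    rintro (i | i) (j | j) <;>
      simp only [r_mul_r, r_mul_sr, sr_mul_r, sr_mul_sr] <;> ring_nf

/-- Let `n > 2` and `G = D_{2^n}` the dihedral group of order `2^n`, generated by the
rotation `a = r 1` of order `2^{n-1}` and a reflection `x = sr 0`.  The automorphism `φ`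
with `φ(a) = a`, `φ(x) = x * a⁻¹` has the property that `[G,φ]` has at most two elements,
contains `a⁻¹` which has order `2^{n-1} > 2`, and hence `[G,φ]` is not a subgroup. -/
theorem dihedral_twisted_class_not_subgroup (n : ℕ) (hn : 2 < n) :
    ∃ φ : DihedralGroup (2 ^ (n - 1)) ≃* DihedralGroup (2 ^ (n - 1)),
      (∀ i, φ (r i) = r i) ∧ φ (sr 0) = sr 0 * (r 1)⁻¹ ∧
      ({g : DihedralGroup (2 ^ (n - 1)) |
          ∃ a : DihedralGroup (2 ^ (n - 1)), g = a⁻¹ * φ a}.ncard ≤ 2) ∧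
      (r 1)⁻¹ ∈ {g : DihedralGroup (2 ^ (n - 1)) |
          ∃ a : DihedralGroup (2 ^ (n - 1)), g = a⁻¹ * φ a} ∧
      orderOf ((r 1)⁻¹ : DihedralGroup (2 ^ (n - 1))) = 2 ^ (n - 1) ∧
      ¬ ∃ H : Subgroup (DihedralGroup (2 ^ (n - 1))),
          (H : Set (DihedralGroup (2 ^ (n - 1))))
            = {g : DihedralGroup (2 ^ (n - 1)) |
                ∃ a : DihedralGroup (2 ^ (n - 1)), g = a⁻¹ * φ a} := by
  set m := 2 ^ (n - 1) with hm
  refine ⟨ψ m, fun i => rfl, ?_, ?_, ?_, ?_, ?_⟩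
  · show sr (0 - 1) = sr 0 * (r 1)⁻¹
    have h2 : (r 1 : DihedralGroup m)⁻¹ = r (-1) := by
      rw [inv_eq_iff_mul_eq_one, r_mul_r, one_def]; ring_nf
    rw [h2, sr_mul_r]; ring_nf
  · -- set equals {1, (r 1)⁻¹}
    have hsub : {g : DihedralGroup m | ∃ a, g = a⁻¹ * ψ m a}
        ⊆ {1, (r 1)⁻¹} := by
      rintro g ⟨a, rfl⟩
      rcases a with i | i
      · left
        show (r i)⁻¹ * r i = 1
        simp
      · right
        show (sr i)⁻¹ * sr (i - 1) = (r 1)⁻¹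
        have h1 : (sr i)⁻¹ = sr i := by
          rw [inv_eq_iff_mul_eq_one, sr_mul_sr, sub_self, one_def]
        have h2 : (r 1 : DihedralGroup m)⁻¹ = r (-1) := by
          rw [inv_eq_iff_mul_eq_one, r_mul_r, one_def]; ring_nf
        rw [h1, h2, sr_mul_sr]; ring_nf
    calc _ ≤ ({1, (r 1)⁻¹} : Set (DihedralGroup m)).ncard :=
          Set.ncard_le_ncard hsub (Set.toFinite _)
      _ ≤ 2 := Set.ncard_insert_le _ _ |>.trans (by simp)
  · exact ⟨sr 0, by
      show (r 1)⁻¹ = (sr 0)⁻¹ * sr (0 - 1)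
      have h1 : (sr 0 : DihedralGroup m)⁻¹ = sr 0 := by
        rw [inv_eq_iff_mul_eq_one, sr_mul_sr, sub_self, one_def]
      have h2 : (r 1 : DihedralGroup m)⁻¹ = r (-1) := by
        rw [inv_eq_iff_mul_eq_one, r_mul_r, one_def]; ring_nf
      rw [h1, h2, sr_mul_sr]; ring_nf⟩
  · rw [orderOf_inv, orderOf_r_one]
  · rintro ⟨H, hH⟩
    have h2 : (r 1 : DihedralGroup m)⁻¹ = r (-1) := by
      rw [inv_eq_iff_mul_eq_one, r_mul_r, one_def]; ring_nf
    have hmem : (r 1 : DihedralGroup m)⁻¹ ∈ H := by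
      rw [← SetLike.mem_coe, hH]
      exact ⟨sr 0, by
        have h1 : (sr 0 : DihedralGroup m)⁻¹ = sr 0 := by
          rw [inv_eq_iff_mul_eq_one, sr_mul_sr, sub_self, one_def]
        show (r 1)⁻¹ = (sr 0)⁻¹ * sr (0 - 1)
        rw [h1, h2, sr_mul_sr]; ring_nf⟩
    have hsq : ((r 1 : DihedralGroup m)⁻¹) * ((r 1)⁻¹) ∈ H := H.mul_mem hmem hmem
    rw [← SetLike.mem_coe, hH] at hsq
    obtain ⟨a, ha⟩ := hsq
    have hm4 : 4 ≤ m := by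
      calc 4 = 2 ^ 2 := rfl
        _ ≤ 2 ^ (n - 1) := Nat.pow_le_pow_right (by norm_num) (by omega)
    have hm0 : (m : ℕ) ≠ 0 := by positivity
    haveI : NeZero m := ⟨hm0⟩
    have hval : (r (-1) : DihedralGroup m) * r (-1) = r (-2) := by
      rw [r_mul_r]; ring_nf
    rw [h2, hval] at ha
    rcases a with i | i
    · -- r (-2) = (r i)⁻¹ * r i = 1
      rw [show (ψ m) (r i) = r i from rfl, inv_mul_cancel] at ha
      have : (r (-2) : DihedralGroup m) = 1 := ha
      rw [one_def, r.injEq] at this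
      have := congrArg ZMod.val this
      rw [ZMod.val_zero] at this
      have hv : ((-2 : ZMod m)).val = m - 2 := by
        have : (-2 : ZMod m) = ((m - 2 : ℕ) : ZMod m) := by
          push_cast [Nat.cast_sub (by omega : 2 ≤ m)]
          simp
        rw [this, ZMod.val_natCast_of_lt (by omega)]
      omega
    · -- r (-2) = (sr i)⁻¹ * sr (i - 1) = r (-1)
      have h1 : (sr i : DihedralGroup m)⁻¹ = sr i := by
        rw [inv_eq_iff_mul_eq_one, sr_mul_sr, sub_self, one_def]
      rw [show (ψ m) (sr i) = sr (i - 1) from rfl, h1, sr_mul_sr] at ha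
      have : (r (-2) : DihedralGroup m) = r (-1) := by rw [ha]; ring_nf
      rw [r.injEq] at this
      have := congrArg ZMod.val this
      have hv2 : ((-2 : ZMod m)).val = m - 2 := by
        have : (-2 : ZMod m) = ((m - 2 : ℕ) : ZMod m) := by
          push_cast [Nat.cast_sub (by omega : 2 ≤ m)]
          simp
        rw [this, ZMod.val_natCast_of_lt (by omega)]
      have hv1 : ((-1 : ZMod m)).val = m - 1 := by
        have : (-1 : ZMod m) = ((m - 1 : ℕ) : ZMod m) := by
          push_cast [Nat.cast_sub (by omega : 1 ≤ m)]
          simp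
        rw [this, ZMod.val_natCast_of_lt (by omega)]
      omega
end

section
/- Suppose a group G is the central product of subgroups H and K (G = HK, [H,K] = 1, H ∩ K = Z(G)). If there is an automorphism ψ of H fixing Z(G) ∩ H pointwise such that [H,ψ] = {h⁻¹ ψ(h) | h ∈ H} is not a subgroup of H, then there exists an automorphism φ of G with [G,φ] = [H,ψ] not a subgroup of G. -/
/-- Suppose `G` is the central product of subgroups `H` and `K` (`G = HK`, `[H,K] = 1`,
`H ∩ K = Z(G)`).  If `ψ` is an automorphism of `H` fixing `Z(G) ∩ H` pointwise such that
`[H,ψ]` is not a subgroup of `H`, then there is an automorphism `φ` of `G` with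
`[G,φ] = [H,ψ]`, which is not a subgroup of `G`. -/
theorem central_product_bad_automorphism {G : Type*} [Group G] (H K : Subgroup G)
    (hcomm : ∀ h ∈ H, ∀ k ∈ K, h * k = k * h)
    (hgen : H ⊔ K = ⊤)
    (hcenter : H ⊓ K = Subgroup.center G)
    (ψ : H ≃* H)
    (hfix : ∀ z : H, (z : G) ∈ Subgroup.center G → ψ z = z)
    (hbad : ¬ ∃ S : Subgroup H, (S : Set H) = {h : H | ∃ a : H, h = a⁻¹ * ψ a}) :
    ∃ φ : G ≃* G,
      {g : G | ∃ a : G, g = a⁻¹ * φ a}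
          = (fun h : H => (h : G)) '' {h : H | ∃ a : H, h = a⁻¹ * ψ a} ∧
      ¬ ∃ S : Subgroup G, (S : Set G) = {g : G | ∃ a : G, g = a⁻¹ * φ a} := by
  classical
  -- every element of G decomposes as h * k
  have decomp : ∀ g : G, ∃ h k : G, h ∈ H ∧ k ∈ K ∧ g = h * k := by
    let M : Subgroup G :=
      { carrier := {g | ∃ h k : G, h ∈ H ∧ k ∈ K ∧ g = h * k}
        one_mem' := ⟨1, 1, one_mem _, one_mem _, by simp⟩
        mul_mem' := by
          rintro x y ⟨h₁, k₁, hh₁, hk₁, rfl⟩ ⟨h₂, k₂, hh₂, hk₂, rfl⟩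
          exact ⟨h₁ * h₂, k₁ * k₂, mul_mem hh₁ hh₂, mul_mem hk₁ hk₂, by
            rw [mul_assoc, ← mul_assoc k₁, ← hcomm h₂ hh₂ k₁ hk₁, mul_assoc, ← mul_assoc]⟩
        inv_mem' := by
          rintro x ⟨h, k, hhm, hkm, rfl⟩
          exact ⟨h⁻¹, k⁻¹, inv_mem hhm, inv_mem hkm, by
            rw [mul_inv_rev, ← hcomm _ (inv_mem hhm) _ (inv_mem hkm)]⟩ }
    have hHM : H ≤ M := fun h hh => ⟨h, 1, hh, one_mem _, by simp⟩
    have hKM : K ≤ M := fun k hk => ⟨1, k, one_mem _, hk, by simp⟩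
    intro g
    have : g ∈ M := by
      have : (⊤ : Subgroup G) ≤ M := hgen ▸ sup_le hHM hKM
      exact this (Subgroup.mem_top g)
    exact this
  choose hh kk hmem kmem heq using decomp
  -- generic well-definedness lemma, for an automorphism of H fixing the center
  have keygen : ∀ (χ : H ≃* H), (∀ z : H, (z : G) ∈ Subgroup.center G → χ z = z) →
      ∀ (h k : G) (hH : h ∈ H) (_ : k ∈ K),
      (χ ⟨hh (h * k), hmem _⟩ : G) * kk (h * k) = (χ ⟨h, hH⟩ : G) * k := by
    intro χ hχ h k hH hK
    have hdk : hh (h * k) * kk (h * k) = h * k := (heq (h * k)).symm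
    set a : H := ⟨hh (h * k), hmem _⟩
    set b : H := ⟨h, hH⟩
    have hzH : ((a⁻¹ * b : H) : G) ∈ H := (a⁻¹ * b).2
    have hcoe : ((a⁻¹ * b : H) : G) = (hh (h * k))⁻¹ * h := rfl
    have hzK : ((a⁻¹ * b : H) : G) ∈ K := by
      have hk2 : (hh (h * k))⁻¹ * h = kk (h * k) * k⁻¹ := by
        rw [inv_mul_eq_iff_eq_mul, ← mul_assoc, hdk, mul_assoc, mul_inv_cancel, mul_one]
      rw [hcoe, hk2]
      exact mul_mem (kmem _) (inv_mem hK)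
    have hzC : ((a⁻¹ * b : H) : G) ∈ Subgroup.center G := hcenter ▸ ⟨hzH, hzK⟩
    have hfixz : χ (a⁻¹ * b) = a⁻¹ * b := hχ _ hzC
    have hb : χ b = χ a * (a⁻¹ * b) := by
      rw [← hfixz, ← map_mul]; congr 1; group
    rw [hb]
    push_cast
    have hkk : kk (h * k) = ((a : G))⁻¹ * (h * k) := by
      rw [eq_inv_mul_iff_mul_eq]; exact hdk
    rw [hkk]
    show (χ a : G) * (((a : G))⁻¹ * (h * k)) = (χ a : G) * (((a : G))⁻¹ * h) * k
    group
  have key := keygen ψ hfix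
  have hfix' : ∀ z : H, (z : G) ∈ Subgroup.center G → ψ.symm z = z := by
    intro z hz
    conv_lhs => rw [← hfix z hz]
    exact ψ.symm_apply_apply z
  have key' := keygen ψ.symm hfix'
  set f : G → G := fun g => (ψ ⟨hh g, hmem g⟩ : G) * kk g with hf
  set f' : G → G := fun g => (ψ.symm ⟨hh g, hmem g⟩ : G) * kk g with hf'
  have hfeq : ∀ (h k : G) (hH : h ∈ H) (hK : k ∈ K), f (h * k) = (ψ ⟨h, hH⟩ : G) * k := by
    intro h k hH hK; exact key h k hH hK
  have hf'eq : ∀ (h k : G) (hH : h ∈ H) (hK : k ∈ K),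
      f' (h * k) = (ψ.symm ⟨h, hH⟩ : G) * k := by
    intro h k hH hK; exact key' h k hH hK
  have left_inv : Function.LeftInverse f' f := by
    intro g
    have h1 : f g = (ψ ⟨hh g, hmem g⟩ : G) * kk g := rfl
    rw [h1, hf'eq _ _ (ψ ⟨hh g, hmem g⟩).2 (kmem g)]
    simp [← heq g]
  have right_inv : Function.RightInverse f' f := by
    intro g
    have h1 : f' g = (ψ.symm ⟨hh g, hmem g⟩ : G) * kk g := rfl
    rw [h1, hfeq _ _ (ψ.symm ⟨hh g, hmem g⟩).2 (kmem g)]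
    simp [← heq g]
  have fmul : ∀ x y : G, f (x * y) = f x * f y := by
    intro x y
    have hcxy := hcomm (hh y) (hmem y) (kk x) (kmem x)
    have hxy : (hh x * hh y) * (kk x * kk y) = x * y := by
      calc (hh x * hh y) * (kk x * kk y) = hh x * (hh y * kk x) * kk y := by group
        _ = hh x * (kk x * hh y) * kk y := by rw [hcxy]
        _ = (hh x * kk x) * (hh y * kk y) := by group
        _ = x * y := by rw [← heq x, ← heq y]
    rw [← hxy, hfeq _ _ (mul_mem (hmem x) (hmem y)) (mul_mem (kmem x) (kmem y))]
    have h2 : (⟨hh x * hh y, mul_mem (hmem x) (hmem y)⟩ : H)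
        = ⟨hh x, hmem x⟩ * ⟨hh y, hmem y⟩ := rfl
    rw [h2, map_mul]
    push_cast
    have hc : (ψ ⟨hh y, hmem y⟩ : G) * kk x = kk x * (ψ ⟨hh y, hmem y⟩ : G) :=
      hcomm _ (ψ ⟨hh y, hmem y⟩).2 _ (kmem x)
    calc (ψ ⟨hh x, hmem x⟩ : G) * (ψ ⟨hh y, hmem y⟩ : G) * (kk x * kk y)
        = (ψ ⟨hh x, hmem x⟩ : G) * ((ψ ⟨hh y, hmem y⟩ : G) * kk x) * kk y := by group
      _ = (ψ ⟨hh x, hmem x⟩ : G) * (kk x * (ψ ⟨hh y, hmem y⟩ : G)) * kk y := by rw [hc]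
      _ = ((ψ ⟨hh x, hmem x⟩ : G) * kk x) * ((ψ ⟨hh y, hmem y⟩ : G) * kk y) := by group
  set φ : G ≃* G := ⟨⟨f, f', left_inv, right_inv⟩, fmul⟩ with hφ
  have hφapp : ∀ g : G, φ g = f g := fun g => rfl
  have hset : {g : G | ∃ a : G, g = a⁻¹ * φ a}
      = (fun h : H => (h : G)) '' {h : H | ∃ a : H, h = a⁻¹ * ψ a} := by
    ext g
    simp only [Set.mem_setOf_eq, Set.mem_image]
    constructor
    · rintro ⟨a, rfl⟩
      refine ⟨⟨hh a, hmem a⟩⁻¹ * ψ ⟨hh a, hmem a⟩, ⟨⟨hh a, hmem a⟩, rfl⟩, ?_⟩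
      rw [hφapp]
      conv_rhs => rw [heq a]
      rw [hfeq _ _ (hmem a) (kmem a)]
      push_cast
      have hc : ((hh a)⁻¹ * (ψ ⟨hh a, hmem a⟩ : G)) * kk a
          = (kk a) * ((hh a)⁻¹ * (ψ ⟨hh a, hmem a⟩ : G)) :=
        hcomm _ (mul_mem (inv_mem (hmem a)) (ψ ⟨hh a, hmem a⟩).2) _ (kmem a)
      calc (hh a)⁻¹ * (ψ ⟨hh a, hmem a⟩ : G)
          = (kk a)⁻¹ * ((kk a) * ((hh a)⁻¹ * (ψ ⟨hh a, hmem a⟩ : G))) := by group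
        _ = (kk a)⁻¹ * (((hh a)⁻¹ * (ψ ⟨hh a, hmem a⟩ : G)) * kk a) := by rw [hc]
        _ = (hh a * kk a)⁻¹ * ((ψ ⟨hh a, hmem a⟩ : G) * kk a) := by group
    · rintro ⟨x, ⟨b, rfl⟩, rfl⟩
      refine ⟨(b : G), ?_⟩
      have hb : φ (b : G) = (ψ b : G) := by
        rw [hφapp]
        have := hfeq (b : G) 1 b.2 (one_mem K)
        simpa using this
      rw [hb]
      push_cast
      rfl
  refine ⟨φ, hset, ?_⟩
  rintro ⟨S, hS⟩
  rw [hset] at hS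
  apply hbad
  refine ⟨S.comap H.subtype, ?_⟩
  ext x
  simp only [SetLike.mem_coe, Subgroup.mem_comap, Subgroup.coe_subtype, Set.mem_setOf_eq]
  rw [← SetLike.mem_coe, hS, Set.mem_image]
  constructor
  · rintro ⟨b, hb, hbe⟩
    rwa [← Subtype.coe_injective hbe]
  · intro hx
    exact ⟨x, hx, rfl⟩
end

section
/- Let p be a prime and G a non-abelian group of order p³. Then there exists an automorphism φ of G fixing the center Z(G) pointwise such that the set [G,φ] = {g⁻¹ φ(g) | g ∈ G} is not a subgroup of G. -/
/-!
Let `Z = Z(G)`; it has order `p`, `G / Z` is elementary abelian of order `p²`, and commutators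
are central. Take `y ∉ Z` and `x` with `x⁻¹ y x = y z`, where `z` generates `Z`. Conjugation of
`y` defines a homomorphism `a : G → ZMod p` by `h⁻¹ y h = y z ^ a(h)`, with `a x = 1`, and
`φ g = g · w (a g)` with `w k = y ^ k z ^ (k choose 2)` is an automorphism fixing `ker a ⊇ Z`,
provided `w` is `p`-periodic: choose `y` of order `p` for odd `p`, and `y` of order `4` for
`p = 2` (then `y² = z`). The set `{g⁻¹ φ g}` is `{w k}`, but `w 1 * w 1 = w 2 * z⁻¹` is not
of that form, since conjugation by `x` multiplies `w k` by `z ^ k`.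
-/

open Subgroup

section ZModExponent

variable {G : Type*} [Group G] {p : ℕ} [NeZero p] {z : G}

lemma pow_val_intCast (hz : orderOf z = p) (n : ℤ) : z ^ (n : ZMod p).val = z ^ n := by
  rw [← zpow_natCast, ZMod.val_intCast, ← hz, zpow_mod_orderOf]

lemma pow_val_natCast (hz : orderOf z = p) (n : ℕ) : z ^ (n : ZMod p).val = z ^ n := by
  simpa using pow_val_intCast hz n

lemma pow_val_add (hz : orderOf z = p) (j k : ZMod p) :
    z ^ (j + k).val = z ^ j.val * z ^ k.val := by
  rw [← pow_add, ← pow_val_natCast hz (j.val + k.val), Nat.cast_add, ZMod.natCast_zmod_val,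
    ZMod.natCast_zmod_val]

lemma pow_val_mul (hz : orderOf z = p) (j k : ZMod p) :
    z ^ (j * k).val = z ^ (j.val * k.val) := by
  rw [← pow_val_natCast hz (j.val * k.val), Nat.cast_mul, ZMod.natCast_zmod_val,
    ZMod.natCast_zmod_val]

lemma pow_val_injective (hz : orderOf z = p) : Function.Injective fun k : ZMod p ↦ z ^ k.val := by
  intro j k h
  have := (ZMod.natCast_eq_natCast_iff _ _ p).mpr (hz ▸ pow_eq_pow_iff_modEq.mp h)
  simpa only [ZMod.natCast_zmod_val] using this

lemma exists_pow_val_eq (hz : orderOf z = p) {g : G} (hg : g ∈ zpowers z) :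
    ∃ k : ZMod p, z ^ k.val = g := by
  obtain ⟨n, rfl⟩ := mem_zpowers_iff.mp hg
  exact ⟨n, pow_val_intCast hz n⟩

end ZModExponent

section TwistedPow

variable {G : Type*} [Group G] {p : ℕ} {x y z : G}

/-- If `x⁻¹ * y * x = y * z` with `z` central, then `(x * y) ^ n = x ^ n * twistedPow y z n`
(`mul_pow_eq_pow_mul_twistedPow`), so an automorphism sending `x` to `x * y` and fixing `y` and
`z` sends `x ^ n` to `x ^ n * twistedPow y z n`. -/
def twistedPow (y z : G) (n : ℕ) : G := y ^ n * z ^ n.choose 2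

@[simp]
lemma twistedPow_zero : twistedPow y z 0 = 1 := by simp [twistedPow]

lemma twistedPow_succ (hz : z ∈ center G) (n : ℕ) :
    twistedPow y z (n + 1) = twistedPow y z n * y * z ^ n := by
  have hyz : Commute y (z ^ n.choose 2) := Commute.pow_right (mem_center_iff.mp hz y) _
  rw [twistedPow, twistedPow, Nat.choose_succ_succ', Nat.choose_one_right, mul_assoc (y ^ n),
    ← hyz.eq]
  group

lemma twistedPow_add (hz : z ∈ center G) (m n : ℕ) :
    twistedPow y z (m + n) = twistedPow y z m * twistedPow y z n * z ^ (m * n) := by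
  induction n with
  | zero => simp
  | succ n ih =>
    have hyz : Commute y (z ^ (m * n)) := Commute.pow_right (mem_center_iff.mp hz y) _
    rw [← add_assoc, twistedPow_succ hz, ih, twistedPow_succ hz, mul_assoc _ (z ^ (m * n)) y,
      ← hyz.eq]
    group

lemma conj_twistedPow (hz : z ∈ center G) {c h : G} (hc : c ∈ center G)
    (hy : h⁻¹ * y * h = y * c) (n : ℕ) :
    h⁻¹ * twistedPow y z n * h = twistedPow y z n * c ^ n := by
  have hyn : h⁻¹ * y ^ n * h = y ^ n * c ^ n := by
    rw [← Commute.mul_pow (mem_center_iff.mp hc y), ← hy]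
    simpa using (conj_pow (a := h⁻¹) (b := y) (i := n)).symm
  have hzh : Commute h (z ^ n.choose 2) := Commute.pow_right (mem_center_iff.mp hz h) _
  have hzc : Commute (c ^ n) (z ^ n.choose 2) := Commute.pow_right (mem_center_iff.mp hz _) _
  rw [twistedPow, mul_assoc, mul_assoc, ← hzh.eq, ← mul_assoc, ← mul_assoc, hyn, mul_assoc,
    hzc.eq, mul_assoc]

lemma mul_pow_eq_pow_mul_twistedPow (hz : z ∈ center G) (hxy : x⁻¹ * y * x = y * z) (n : ℕ) :
    (x * y) ^ n = x ^ n * twistedPow y z n := by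
  induction n with
  | zero => simp
  | succ n ih =>
    have hx : twistedPow y z n * x = x * (twistedPow y z n * z ^ n) := by
      rw [← conj_twistedPow hz hz hxy]; group
    have hyz : Commute y (z ^ n) := Commute.pow_right (mem_center_iff.mp hz y) _
    calc (x * y) ^ (n + 1) = x ^ n * (twistedPow y z n * x) * y := by rw [pow_succ, ih]; group
      _ = x ^ n * x * twistedPow y z n * (z ^ n * y) := by rw [hx]; group
      _ = x ^ (n + 1) * twistedPow y z (n + 1) := by rw [← hyz.eq, twistedPow_succ hz]; group

lemma twistedPow_add_mul (hz : orderOf z = p) (hzc : z ∈ center G) (hW : twistedPow y z p = 1)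
    (m q : ℕ) : twistedPow y z (m + p * q) = twistedPow y z m := by
  induction q with
  | zero => simp
  | succ q ih =>
    rw [mul_add_one, ← add_assoc, twistedPow_add hzc, ih, hW, mul_comm _ p, pow_mul, ← hz,
      pow_orderOf_eq_one, one_pow, mul_one, mul_one]

lemma twistedPow_mod (hz : orderOf z = p) (hzc : z ∈ center G) (hW : twistedPow y z p = 1)
    (n : ℕ) : twistedPow y z (n % p) = twistedPow y z n := by
  conv_rhs => rw [← Nat.mod_add_div n p]
  exact (twistedPow_add_mul hz hzc hW _ _).symm

lemma twistedPow_val_add [NeZero p] (hz : orderOf z = p) (hzc : z ∈ center G)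
    (hW : twistedPow y z p = 1) (j k : ZMod p) :
    twistedPow y z (j + k).val =
      twistedPow y z j.val * twistedPow y z k.val * z ^ (j * k).val := by
  rw [ZMod.val_add, twistedPow_mod hz hzc hW, twistedPow_add hzc, pow_val_mul hz]

lemma twistedPow_eq_pow (hp : p.Prime) (hp2 : p ≠ 2) (hz : z ^ p = 1) :
    twistedPow y z p = y ^ p := by
  obtain ⟨m, hm⟩ := hp.dvd_choose_self two_ne_zero (lt_of_le_of_ne hp.two_le hp2.symm)
  rw [twistedPow, hm, pow_mul, hz, one_pow, mul_one]

end TwistedPow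

section TwistAutomorphism

variable {G : Type*} [Group G] {p : ℕ} [NeZero p] {x y z : G} {a : G → ZMod p}

lemma commute_twistedPow (hzc : z ∈ center G) (n : ℕ) : Commute (twistedPow y z n) y :=
  ((Commute.refl y).pow_left n).mul_left (Commute.pow_left (mem_center_iff.mp hzc y).symm _)

lemma exists_conj_eq_mul_pow_val (hz : orderOf z = p) (hcomm : commutator G ≤ zpowers z)
    (y : G) : ∃ a : G → ZMod p, ∀ h, h⁻¹ * y * h = y * z ^ (a h).val := by
  have (h : G) : ∃ k : ZMod p, h⁻¹ * y * h = y * z ^ k.val := by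
    obtain ⟨k, hk⟩ := exists_pow_val_eq hz
      (hcomm (commutator_mem_commutator (mem_top y⁻¹) (mem_top h⁻¹)))
    refine ⟨k, ?_⟩
    rw [hk, commutatorElement_def]
    group
  choose a ha using this
  exact ⟨a, ha⟩

lemma eq_of_conj_eq_mul_pow_val (hz : orderOf z = p)
    (ha : ∀ h, h⁻¹ * y * h = y * z ^ (a h).val) {h : G} {k : ZMod p}
    (hk : h⁻¹ * y * h = y * z ^ k.val) : a h = k :=
  pow_val_injective hz (mul_left_cancel ((ha h).symm.trans hk))

lemma eq_zero_of_commute (hz : orderOf z = p) (ha : ∀ h, h⁻¹ * y * h = y * z ^ (a h).val)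
    {h : G} (hh : Commute h y) : a h = 0 :=
  eq_of_conj_eq_mul_pow_val hz ha (by rw [ZMod.val_zero, pow_zero, mul_one, mul_assoc, ← hh.eq,
    inv_mul_cancel_left])

lemma map_mul_of_conj_eq_mul_pow_val (hz : orderOf z = p) (hzc : z ∈ center G)
    (ha : ∀ h, h⁻¹ * y * h = y * z ^ (a h).val) (g h : G) : a (g * h) = a g + a h := by
  apply eq_of_conj_eq_mul_pow_val hz ha
  have hzh : Commute h (z ^ (a g).val) := Commute.pow_right (mem_center_iff.mp hzc h) _
  calc (g * h)⁻¹ * y * (g * h) = h⁻¹ * (y * z ^ (a g).val * h) := by rw [← ha g]; group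
    _ = y * z ^ (a h).val * z ^ (a g).val := by rw [mul_assoc y, ← hzh.eq, ← ha h]; group
    _ = y * z ^ (a g + a h).val := by rw [pow_val_add hz, mul_assoc, pow_mul_comm]

lemma conj_twistedPow_val (hz : orderOf z = p) (hzc : z ∈ center G)
    (ha : ∀ h, h⁻¹ * y * h = y * z ^ (a h).val) (h : G) (k : ZMod p) :
    h⁻¹ * twistedPow y z k.val * h = twistedPow y z k.val * z ^ (k * a h).val := by
  rw [conj_twistedPow hzc (pow_mem hzc _) (ha h), ← pow_mul, pow_val_mul hz, mul_comm k.val]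

lemma exists_mulEquiv_apply_eq_mul_twistedPow (hz : orderOf z = p) (hzc : z ∈ center G)
    (ha : ∀ h, h⁻¹ * y * h = y * z ^ (a h).val) (hW : twistedPow y z p = 1) :
    ∃ φ : G ≃* G, ∀ g, φ g = g * twistedPow y z (a g).val := by
  have ha_mul := map_mul_of_conj_eq_mul_pow_val hz hzc ha
  have ha_twist (n : ℕ) : a (twistedPow y z n) = 0 :=
    eq_zero_of_commute hz ha (commute_twistedPow hzc n)
  have ha_twist_inv (n : ℕ) : a (twistedPow y z n)⁻¹ = 0 :=
    eq_zero_of_commute hz ha (commute_twistedPow hzc n).inv_left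
  refine ⟨{ toFun g := g * twistedPow y z (a g).val
            invFun g := g * (twistedPow y z (a g).val)⁻¹
            left_inv g := by simp [ha_mul, ha_twist]
            right_inv g := by simp [ha_mul, ha_twist_inv]
            map_mul' g h := ?_ }, fun _ ↦ rfl⟩
  have hzW : Commute (twistedPow y z (a h).val) (z ^ (a g * a h).val) :=
    Commute.pow_right (mem_center_iff.mp hzc _) _
  calc g * h * twistedPow y z (a (g * h)).val
      = g * h * (twistedPow y z (a g).val * z ^ (a g * a h).val) * twistedPow y z (a h).val := by
        rw [ha_mul, twistedPow_val_add hz hzc hW, mul_assoc (twistedPow y z (a g).val),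
          hzW.eq]
        group
    _ = g * twistedPow y z (a g).val * (h * twistedPow y z (a h).val) := by
        rw [← conj_twistedPow_val hz hzc ha]; group

lemma twistedPow_val_ne_mul (hz : orderOf z = p) (hzc : z ∈ center G) (hz1 : z ≠ 1)
    (hxy : x⁻¹ * y * x = y * z) (j k : ZMod p) :
    twistedPow y z j.val ≠ twistedPow y z k.val * z := by
  intro h
  have hjk : j = k := by
    apply pow_val_injective hz
    have hconj : twistedPow y z k.val * (z * z ^ j.val) = twistedPow y z k.val * (z ^ k.val * z) :=
      calc _ = x⁻¹ * (twistedPow y z k.val * z) * x := by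
            rw [← h, conj_twistedPow hzc hzc hxy, h, mul_assoc]
        _ = x⁻¹ * twistedPow y z k.val * x * z := by
            simp only [mul_assoc, mem_center_iff.mp hzc x]
        _ = _ := by rw [conj_twistedPow hzc hzc hxy, mul_assoc]
    rw [(Commute.self_pow z j.val).eq] at hconj
    exact mul_right_cancel (mul_left_cancel hconj)
  rw [hjk, left_eq_mul] at h
  exact hz1 h

theorem exists_mulEquiv_fixing_center_not_subgroup (hz : orderOf z = p) (hzc : z ∈ center G)
    (hz1 : z ≠ 1) (hcomm : commutator G ≤ zpowers z) (hxy : x⁻¹ * y * x = y * z)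
    (hW : twistedPow y z p = 1) :
    ∃ φ : G ≃* G, (∀ c ∈ center G, φ c = c) ∧
      ¬ ∃ H : Subgroup G, (H : Set G) = {g : G | ∃ a : G, g = a⁻¹ * φ a} := by
  obtain ⟨a, ha⟩ := exists_conj_eq_mul_pow_val hz hcomm y
  obtain ⟨φ, hφ⟩ := exists_mulEquiv_apply_eq_mul_twistedPow hz hzc ha hW
  refine ⟨φ, fun c hc ↦ ?_, ?_⟩
  · rw [hφ, eq_zero_of_commute hz ha (mem_center_iff.mp hc y).symm, ZMod.val_zero,
      twistedPow_zero, mul_one]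
  rintro ⟨H, hH⟩
  have hmem (g : G) : g ∈ H ↔ ∃ b, g = twistedPow y z (a b).val := by
    rw [← SetLike.mem_coe, hH]
    simp [hφ]
  have hz_one : z ^ (1 : ZMod p).val = z := by simpa using pow_val_natCast hz 1
  have hax : a x = 1 := eq_of_conj_eq_mul_pow_val hz ha (by rw [hz_one, hxy])
  have hone : twistedPow y z (1 : ZMod p).val ∈ H := (hmem _).mpr ⟨x, by rw [hax]⟩
  obtain ⟨b, hb⟩ := (hmem _).mp (H.mul_mem hone hone)
  apply twistedPow_val_ne_mul hz hzc hz1 hxy (1 + 1) (a b)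
  rw [twistedPow_val_add hz hzc hW, ← hb, mul_one, hz_one]

end TwistAutomorphism

section ClassTwo

variable {G : Type*} [Group G]

lemma exists_conj_eq_mul_of_notMem_center (hcomm : commutator G ≤ center G) {y : G}
    (hy : y ∉ center G) : ∃ x z : G, z ∈ center G ∧ z ≠ 1 ∧ x⁻¹ * y * x = y * z := by
  obtain ⟨x, hxy⟩ : ∃ x, x * y ≠ y * x := by simpa [mem_center_iff] using hy
  refine ⟨x, y⁻¹ * x⁻¹ * y * x, ?_, fun h ↦ hxy (inv_mul_eq_one.mp (by rw [← h]; group)),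
    by group⟩
  have := hcomm (commutator_mem_commutator (mem_top y⁻¹) (mem_top x⁻¹))
  simpa [commutatorElement_def] using this

lemma mul_pow_prime_of_commutator_le_center {p : ℕ} (hp : p.Prime) (hp2 : p ≠ 2)
    (hcomm : commutator G ≤ center G) (hexp : ∀ c ∈ center G, c ^ p = 1) (g h : G) :
    (g * h) ^ p = g ^ p * h ^ p := by
  have hc : h⁻¹ * g⁻¹ * h * g ∈ center G := by
    have := hcomm (commutator_mem_commutator (mem_top h⁻¹) (mem_top g⁻¹))
    simpa [commutatorElement_def] using this
  rw [mul_pow_eq_pow_mul_twistedPow hc (by group), twistedPow_eq_pow hp hp2 (hexp _ hc)]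

end ClassTwo

namespace NonabelianPrimeCube

variable {G : Type*} [Group G] {p : ℕ} [Fact p.Prime]

lemma not_isCyclic_quotient_center (hnab : ∃ a b : G, a * b ≠ b * a) :
    ¬ IsCyclic (G ⧸ center G) := fun _ ↦
  let ⟨a, b, hab⟩ := hnab
  hab ((isMulCommutative_of_isCyclic_quotient_center_self G).is_comm.comm a b)

lemma card_center_eq_prime (hcard : Nat.card G = p ^ 3) (hnab : ∃ a b : G, a * b ≠ b * a) :
    Nat.card (center G) = p := by
  obtain ⟨k, hk0, hk⟩ := IsPGroup.card_center_eq_prime_pow hcard three_pos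
  obtain rfl | hk2 : k = 1 ∨ 2 ≤ k := by omega
  · exact hk.trans (pow_one p)
  refine absurd (isCyclic_of_card_dvd_prime (p := p) ?_) (not_isCyclic_quotient_center hnab)
  have hmul := (center G).card_mul_index
  rw [hk, hcard] at hmul
  have : p ^ 2 * (p ^ (k - 2) * (center G).index) = p ^ 2 * p := by
    rw [← mul_assoc, ← pow_add, Nat.add_sub_cancel' hk2, hmul]; ring
  exact Dvd.intro_left _ (Nat.eq_of_mul_eq_mul_left (pow_pos (Fact.out : p.Prime).pos 2) this)

lemma card_quotient_center (hcard : Nat.card G = p ^ 3) (hnab : ∃ a b : G, a * b ≠ b * a) :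
    Nat.card (G ⧸ center G) = p ^ 2 := by
  have hmul := (center G).card_mul_index
  rw [card_center_eq_prime hcard hnab, hcard, pow_succ' p 2] at hmul
  exact Nat.eq_of_mul_eq_mul_left (Fact.out : p.Prime).pos hmul

lemma commutator_le_center (hcard : Nat.card G = p ^ 3) (hnab : ∃ a b : G, a * b ≠ b * a) :
    commutator G ≤ center G :=
  Normal.quotient_commutative_iff_commutator_le.mp
    (IsPGroup.isMulCommutative_of_card_eq_prime_sq (card_quotient_center hcard hnab))

lemma pow_mem_center (hcard : Nat.card G = p ^ 3) (hnab : ∃ a b : G, a * b ≠ b * a) (g : G) :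
    g ^ p ∈ center G := by
  have hexp := (not_isCyclic_iff_exponent_eq_prime Fact.out
    (card_quotient_center hcard hnab)).mp (not_isCyclic_quotient_center hnab)
  rw [← QuotientGroup.eq_one_iff, QuotientGroup.mk_pow, ← hexp]
  exact Monoid.pow_exponent_eq_one _

lemma pow_eq_one_of_mem_center (hcard : Nat.card G = p ^ 3) (hnab : ∃ a b : G, a * b ≠ b * a)
    {c : G} (hc : c ∈ center G) : c ^ p = 1 :=
  orderOf_dvd_iff_pow_eq_one.mp
    (card_center_eq_prime hcard hnab ▸ (center G).orderOf_dvd_natCard hc)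

lemma center_eq_zpowers (hcard : Nat.card G = p ^ 3) (hnab : ∃ a b : G, a * b ≠ b * a)
    {c : G} (hc : c ∈ center G) (hc1 : c ≠ 1) : center G = zpowers c := by
  have : Finite G := Nat.finite_of_card_ne_zero (by simp [hcard, (Fact.out : p.Prime).ne_zero])
  refine (eq_of_le_of_card_ge (zpowers_le.mpr hc) ?_).symm
  rw [Nat.card_zpowers, orderOf_eq_prime (pow_eq_one_of_mem_center hcard hnab hc) hc1,
    card_center_eq_prime hcard hnab]

lemma exists_pow_eq_one_notMem_center (hcard : Nat.card G = p ^ 3)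
    (hnab : ∃ a b : G, a * b ≠ b * a) (hp2 : p ≠ 2) :
    ∃ y : G, y ^ p = 1 ∧ y ∉ center G := by
  have : Finite G := Nat.finite_of_card_ne_zero (by simp [hcard, (Fact.out : p.Prime).ne_zero])
  let P : G →* G := MonoidHom.mk' (· ^ p) (mul_pow_prime_of_commutator_le_center Fact.out hp2
    (commutator_le_center hcard hnab) fun _ ↦ pow_eq_one_of_mem_center hcard hnab)
  by_contra! h
  have hker : Nat.card P.ker ≤ p :=
    card_center_eq_prime hcard hnab ▸ card_le_of_le fun y hy ↦ h y hy
  have hrange : Nat.card P.range ≤ p :=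
    card_center_eq_prime hcard hnab ▸ card_le_of_le (by
      rintro _ ⟨g, rfl⟩; exact pow_mem_center hcard hnab g)
  have hmul := P.ker.card_mul_index
  rw [index_ker, hcard] at hmul
  have := Nat.mul_le_mul hker hrange
  rw [hmul, ← sq] at this
  exact absurd this
    (Nat.not_le.mpr (Nat.pow_lt_pow_right (Fact.out : p.Prime).one_lt (by norm_num)))

lemma exists_conj_eq_mul_twistedPow_eq_one (hcard : Nat.card G = p ^ 3)
    (hnab : ∃ a b : G, a * b ≠ b * a) :
    ∃ x y z : G,
      z ∈ center G ∧ z ≠ 1 ∧ x⁻¹ * y * x = y * z ∧ twistedPow y z p = 1 := by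
  have hcomm := commutator_le_center hcard hnab
  obtain rfl | hp2 := eq_or_ne p 2
  · obtain ⟨y, hy⟩ : ∃ y : G, y ^ 2 ≠ 1 := by
      by_contra! h
      obtain ⟨a, b, hab⟩ := hnab
      exact hab (Commute.of_orderOf_dvd_two (fun g ↦ orderOf_dvd_of_pow_eq_one (h g)) a b)
    obtain ⟨x, z, hzc, hz1, hxy⟩ := exists_conj_eq_mul_of_notMem_center hcomm
      fun hc ↦ hy (pow_eq_one_of_mem_center hcard hnab hc)
    have hyz : y ^ 2 = z := congrArg Subtype.val <|
      ((Nat.card_eq_two_iff' (1 : center G)).mp (card_center_eq_prime hcard hnab)).unique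
        (y₁ := ⟨y ^ 2, pow_mem_center hcard hnab y⟩) (y₂ := ⟨z, hzc⟩)
        (by simpa [Subtype.ext_iff] using hy) (by simpa [Subtype.ext_iff] using hz1)
    refine ⟨x, y, z, hzc, hz1, hxy, ?_⟩
    rw [twistedPow, hyz, Nat.choose_self, pow_one, ← sq, pow_eq_one_of_mem_center hcard hnab hzc]
  · obtain ⟨y, hyp, hy⟩ := exists_pow_eq_one_notMem_center hcard hnab hp2
    obtain ⟨x, z, hzc, hz1, hxy⟩ := exists_conj_eq_mul_of_notMem_center hcomm hy
    refine ⟨x, y, z, hzc, hz1, hxy, ?_⟩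
    rw [twistedPow_eq_pow Fact.out hp2 (pow_eq_one_of_mem_center hcard hnab hzc), hyp]

end NonabelianPrimeCube

open NonabelianPrimeCube

/-- Let `p` be a prime and `G` a non-abelian group of order `p³`.  Then there exists an
automorphism `φ` of `G` fixing the center pointwise such that
`[G,φ] = {g⁻¹ φ(g) | g ∈ G}` is not a subgroup of `G`. -/
theorem extraspecial_building_block_bad_automorphism (p : ℕ) (hp : p.Prime)
    (G : Type*) [Group G] (hcard : Nat.card G = p ^ 3)
    (hnab : ∃ a b : G, a * b ≠ b * a) :
    ∃ φ : G ≃* G, (∀ z ∈ Subgroup.center G, φ z = z) ∧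
      ¬ ∃ H : Subgroup G, (H : Set G) = {g : G | ∃ a : G, g = a⁻¹ * φ a} := by
  have : Fact p.Prime := ⟨hp⟩
  obtain ⟨x, y, z, hzc, hz1, hxy, hW⟩ := exists_conj_eq_mul_twistedPow_eq_one hcard hnab
  have hz : orderOf z = p := orderOf_eq_prime (pow_eq_one_of_mem_center hcard hnab hzc) hz1
  have hcomm : commutator G ≤ zpowers z :=
    center_eq_zpowers hcard hnab hzc hz1 ▸ commutator_le_center hcard hnab
  exact exists_mulEquiv_fixing_center_not_subgroup hz hzc hz1 hcomm hxy hW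
end
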